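/- arXiv:1110.0938 — 5 statements merged into one kernel-verified Lean document; each statement's English description precedes it below -/
import Mathlib

section
/- Let γ = 1/(4·3^α·(4β+2)) and let ρ > 0. If a finite set L of n links is ρ-amenable, then there exists a subset S ⊆ L with |S| ≥ γ·n/(4ρ) such that for every ℓ' ∈ S, Σ_{ℓ ∈ S, ℓ ≤ ℓ'} f_ℓ(ℓ') ≤ γ; in particular Ω(n) links of L can be scheduled in a single slot. -/
open scoped Classical
noncomputable section

/-- A point in the Euclidean plane. -/
abbrev Point : Type := EuclideanSpace ℝ (Fin 2)

/-- A link is an ordered pair (sender, receiver) of points. -/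
abbrev Link : Type := Point × Point

/-- The length of a link: the distance from its sender to its receiver. -/
def linkLen (l : Link) : ℝ := dist l.1 l.2

/-- The set `S` of links satisfies all the SINR constraints under the power
assignment `Pw` (path-loss exponent `α`, SINR threshold `β`, noise ignored). -/
def FeasibleWith (α β : ℝ) (S : Finset Link) (Pw : Link → ℝ) : Prop :=
  ∀ l ∈ S, β * ∑ l' ∈ S.erase l, Pw l' / dist l'.1 l.2 ^ α ≤ Pw l / linkLen l ^ α

/-- A set of links is feasible if some positive power assignment satisfies all
its SINR constraints. -/
def Feasible (α β : ℝ) (S : Finset Link) : Prop :=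
  ∃ Pw : Link → ℝ, (∀ l ∈ S, 0 < Pw l) ∧ FeasibleWith α β S Pw

/-- `S` is a partition of the link set `L` into `k` (possibly empty) sets. -/
def IsPartition (L : Finset Link) {k : ℕ} (S : Fin k → Finset Link) : Prop :=
  (∀ i, S i ⊆ L) ∧ (∀ l ∈ L, ∃ i, l ∈ S i) ∧
    ∀ i j : Fin k, i ≠ j → Disjoint (S i) (S j)

/-- Total Euclidean edge length of a graph on the point set `P`. -/
def treeWeight (P : Finset Point) (T : SimpleGraph ↥P) : ℝ :=
  (1 / 2) * ∑ p ∈ P.attach, ∑ q ∈ P.attach,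
    if T.Adj p q then dist (p : Point) (q : Point) else 0

/-- `T` is a minimum spanning tree of `P`: a spanning tree of the complete
graph on `P` of minimum total Euclidean edge length. -/
def IsMST (P : Finset Point) (T : SimpleGraph ↥P) : Prop :=
  T.IsTree ∧ ∀ T' : SimpleGraph ↥P, T'.IsTree → treeWeight P T ≤ treeWeight P T'

/-- `L` is an orientation of the edges of `T` into links: every link of `L`
is an oriented edge of `T`, and every edge of `T` appears in exactly one of
its two orientations. -/
def IsOrientationOf (P : Finset Point) (T : SimpleGraph ↥P) (L : Finset Link) : Prop :=
  (∀ l ∈ L, ∃ p q : ↥P, T.Adj p q ∧ l = ((p : Point), (q : Point))) ∧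
  (∀ p q : ↥P, T.Adj p q →
    (((p : Point), (q : Point)) ∈ L ∨ ((q : Point), (p : Point)) ∈ L)) ∧
  (∀ p q : ↥P, T.Adj p q →
    ¬((((p : Point), (q : Point)) ∈ L) ∧ (((q : Point), (p : Point)) ∈ L)))

/-- The interference measure `f_ℓ(ℓ')`: equals
`min(1, ℓ^α / min(d(s,r'), d(s',r))^α)` when `ℓ` is no longer than `ℓ'` and
`ℓ ≠ ℓ'`, and `0` otherwise. -/
def flink (α : ℝ) (l l' : Link) : ℝ :=
  if linkLen l ≤ linkLen l' ∧ l ≠ l' then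
    min 1 (linkLen l ^ α / min (dist l.1 l'.2) (dist l'.1 l.2) ^ α)
  else 0

/-- A finite set `L` of links is `ρ`-amenable if for every link `ℓ`
(not necessarily in `L`), `Σ_{ℓ' ∈ L, ℓ' ≥ ℓ} f_ℓ(ℓ') ≤ ρ`. -/
def Amenable (α ρ : ℝ) (L : Finset Link) : Prop :=
  ∀ l : Link, l.1 ≠ l.2 →
    ∑ l' ∈ L.filter (fun l' => linkLen l ≤ linkLen l'), flink α l l' ≤ ρ

/-!
Sample every link of `L` independently with probability `p = γ / (2ρ)`. The expected size of the
sample `S` is `p n`, and since `f_ℓ(ℓ) = 0`, the expected total interference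
`I(S) = Σ_{ℓ, ℓ' ∈ S} f_ℓ(ℓ')` is `p² Σ_{ℓ, ℓ' ∈ L} f_ℓ(ℓ') ≤ p² ρ n` by amenability. By Markov's
inequality at most `I(S) / γ` links of `S` receive interference more than `γ` from `S`, so
discarding them leaves, for a suitable `S`, at least `p n - p² ρ n / γ = γ n / (4ρ)` links.
Amenability forces `ρ ≥ 1` (test it with the second half of any link of `L`), so `p < 1`.
-/

section Sampling

variable {α : Type*} [DecidableEq α]

/-- The probability that a random subset of `M`, containing each element independently with
probability `p`, equals `S`. -/
def sampleWeight (p : ℝ) (M S : Finset α) : ℝ :=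
  p ^ S.card * (1 - p) ^ (M \ S).card

variable {p : ℝ} {M : Finset α}

lemma sampleWeight_pos (hp₀ : 0 < p) (hp₁ : p < 1) (S : Finset α) : 0 < sampleWeight p M S :=
  mul_pos (pow_pos hp₀ _) (pow_pos (sub_pos.mpr hp₁) _)

lemma sum_sampleWeight_of_subset {A : Finset α} (hA : A ⊆ M) :
    ∑ S ∈ M.powerset, (if A ⊆ S then sampleWeight p M S else 0) = p ^ A.card := by
  have hterm : ∀ S ∈ M.powerset,
      (∏ _i ∈ S, p) * ∏ i ∈ M \ S, (if i ∈ A then 0 else 1 - p) =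
        if A ⊆ S then sampleWeight p M S else 0 := by
    intro S _
    split_ifs with hAS
    · rw [sampleWeight, Finset.prod_const, Finset.prod_congr rfl fun i hi =>
        if_neg fun hiA => (Finset.mem_sdiff.mp hi).2 (hAS hiA), Finset.prod_const]
    · obtain ⟨a, haA, haS⟩ := Finset.not_subset.mp hAS
      exact mul_eq_zero_of_right _
        (Finset.prod_eq_zero (Finset.mem_sdiff.mpr ⟨hA haA, haS⟩) (if_pos haA))
  rw [← Finset.sum_congr rfl hterm, ← Finset.prod_add]
  calc ∏ i ∈ M, (p + if i ∈ A then 0 else 1 - p)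
      = ∏ i ∈ M, (if i ∈ A then p else 1) :=
        Finset.prod_congr rfl fun i _ => by split_ifs <;> ring
    _ = p ^ A.card := by
        rw [Finset.prod_ite_mem, Finset.inter_eq_right.mpr hA, Finset.prod_const]

lemma sum_sampleWeight : ∑ S ∈ M.powerset, sampleWeight p M S = 1 := by
  simpa using sum_sampleWeight_of_subset (p := p) (Finset.empty_subset M)

lemma sum_sampleWeight_mul_card :
    ∑ S ∈ M.powerset, sampleWeight p M S * S.card = p * M.card := by
  have hcard : ∀ S ∈ M.powerset,
      sampleWeight p M S * S.card = ∑ v ∈ M, if {v} ⊆ S then sampleWeight p M S else 0 := by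
    intro S hS
    simp_rw [Finset.singleton_subset_iff]
    rw [Finset.sum_ite_mem, Finset.inter_eq_right.mpr (Finset.mem_powerset.mp hS),
      Finset.sum_const, nsmul_eq_mul, mul_comm]
  rw [Finset.sum_congr rfl hcard, Finset.sum_comm, Finset.sum_congr rfl fun v hv =>
    sum_sampleWeight_of_subset (Finset.singleton_subset_iff.mpr hv)]
  simp [mul_comm]

lemma sum_sampleWeight_mul_sum_sum (g : α → α → ℝ) (hg : ∀ a, g a a = 0) :
    ∑ S ∈ M.powerset, sampleWeight p M S * ∑ v ∈ S, ∑ l ∈ S, g l v =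
      p ^ 2 * ∑ v ∈ M, ∑ l ∈ M, g l v := by
  have hpairs : ∀ S ∈ M.powerset, sampleWeight p M S * ∑ v ∈ S, ∑ l ∈ S, g l v =
      ∑ v ∈ M, ∑ l ∈ M, g l v * if {v, l} ⊆ S then sampleWeight p M S else 0 := by
    intro S hS
    have hSM := Finset.mem_powerset.mp hS
    have hrestrict : ∀ f : α → ℝ, ∑ v ∈ S, f v = ∑ v ∈ M, if v ∈ S then f v else 0 := fun f => by
      rw [Finset.sum_ite_mem, Finset.inter_eq_right.mpr hSM]
    simp_rw [Finset.insert_subset_iff, Finset.singleton_subset_iff]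
    rw [hrestrict, Finset.mul_sum]
    refine Finset.sum_congr rfl fun v _ => ?_
    by_cases hv : v ∈ S
    · simp only [hv, true_and, if_true]
      rw [hrestrict, Finset.mul_sum]
      exact Finset.sum_congr rfl fun l _ => by split_ifs <;> ring
    · simp [hv]
  rw [Finset.sum_congr rfl hpairs, Finset.sum_comm, Finset.mul_sum]
  refine Finset.sum_congr rfl fun v hv => ?_
  rw [Finset.sum_comm, Finset.mul_sum]
  refine Finset.sum_congr rfl fun l hl => ?_
  rw [← Finset.mul_sum, sum_sampleWeight_of_subset (Finset.insert_subset hv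
    (Finset.singleton_subset_iff.mpr hl))]
  rcases eq_or_ne v l with rfl | hvl
  · simp [hg]
  · rw [Finset.card_pair hvl, mul_comm]

lemma exists_le_of_le_sum_sampleWeight_mul (hp₀ : 0 < p) (hp₁ : p < 1) {c : ℝ}
    (X : Finset α → ℝ) (h : c ≤ ∑ S ∈ M.powerset, sampleWeight p M S * X S) :
    ∃ S ⊆ M, c ≤ X S := by
  have hle : ∑ S ∈ M.powerset, sampleWeight p M S * c ≤
      ∑ S ∈ M.powerset, sampleWeight p M S * X S := by
    rwa [← Finset.sum_mul, sum_sampleWeight, one_mul]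
  obtain ⟨S, hS, hcS⟩ := Finset.exists_le_of_sum_le M.powerset_nonempty hle
  exact ⟨S, Finset.mem_powerset.mp hS,
    le_of_mul_le_mul_left hcS (sampleWeight_pos hp₀ hp₁ S)⟩

end Sampling

lemma card_sub_sum_div_le_card_filter {α : Type*} (s : Finset α) {F : α → ℝ}
    (hF : ∀ a ∈ s, 0 ≤ F a) {γ : ℝ} (hγ : 0 < γ) :
    (s.card : ℝ) - (∑ a ∈ s, F a) / γ ≤ (s.filter (F · ≤ γ)).card := by
  set bad := s.filter (fun a => ¬ F a ≤ γ)
  have hbad : (bad.card : ℝ) ≤ (∑ a ∈ s, F a) / γ := by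
    rw [le_div_iff₀' hγ]
    calc γ * bad.card ≤ ∑ a ∈ bad, F a := by
          rw [mul_comm, ← nsmul_eq_mul]
          exact Finset.card_nsmul_le_sum _ _ _ fun a ha =>
            (not_le.mp (Finset.mem_filter.mp ha).2).le
      _ ≤ ∑ a ∈ s, F a :=
          Finset.sum_le_sum_of_subset_of_nonneg (Finset.filter_subset _ _) fun a ha _ => hF a ha
  have hsplit : (s.card : ℝ) = (s.filter (F · ≤ γ)).card + bad.card := by
    exact_mod_cast (Finset.card_filter_add_card_filter_not (s := s) (F · ≤ γ)).symm
  linarith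

theorem exists_large_subset_of_sum_sum_le {α : Type*} [DecidableEq α] (M : Finset α)
    {g : α → α → ℝ} (hg₀ : ∀ a b, 0 ≤ g a b) (hg : ∀ a, g a a = 0) {ρ γ : ℝ} (hγ : 0 < γ)
    (hγρ : γ < 2 * ρ) (htot : ∑ v ∈ M, ∑ l ∈ M, g l v ≤ ρ * M.card) :
    ∃ G ⊆ M, γ * M.card / (4 * ρ) ≤ G.card ∧ ∀ v ∈ G, ∑ l ∈ G, g l v ≤ γ := by
  have hρ : 0 < ρ := by linarith
  set p := γ / (2 * ρ) with hp
  have hp₀ : 0 < p := by positivity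
  have hp₁ : p < 1 := (div_lt_one (by positivity)).mpr hγρ
  have hmean : γ * M.card / (4 * ρ) ≤ ∑ S ∈ M.powerset,
      sampleWeight p M S * (S.card - (∑ v ∈ S, ∑ l ∈ S, g l v) / γ) :=
    calc γ * M.card / (4 * ρ) = p * M.card - p ^ 2 * (ρ * M.card) / γ := by
          rw [hp]; field_simp; ring
      _ ≤ p * M.card - p ^ 2 * (∑ v ∈ M, ∑ l ∈ M, g l v) / γ := by gcongr
      _ = _ := by
          rw [← sum_sampleWeight_mul_card, ← sum_sampleWeight_mul_sum_sum g hg,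
            Finset.sum_div, ← Finset.sum_sub_distrib]
          simp only [mul_sub, mul_div_assoc]
  obtain ⟨S, hSM, hS⟩ := exists_le_of_le_sum_sampleWeight_mul hp₀ hp₁ _ hmean
  refine ⟨S.filter (fun v => ∑ l ∈ S, g l v ≤ γ), (Finset.filter_subset _ _).trans hSM,
    hS.trans (card_sub_sum_div_le_card_filter S
      (fun v _ => Finset.sum_nonneg fun l _ => hg₀ l v) hγ), fun v hv => ?_⟩
  exact (Finset.sum_le_sum_of_subset_of_nonneg (Finset.filter_subset _ _)
    fun l _ _ => hg₀ l v).trans (Finset.mem_filter.mp hv).2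

lemma flink_nonneg (α : ℝ) (l l' : Link) : 0 ≤ flink α l l' := by
  unfold flink
  split_ifs
  · exact le_min zero_le_one (div_nonneg (Real.rpow_nonneg dist_nonneg _)
      (Real.rpow_nonneg (le_min dist_nonneg dist_nonneg) _))
  · exact le_rfl

lemma flink_self (α : ℝ) (l : Link) : flink α l l = 0 := by
  simp [flink]

lemma linkLen_le_of_flink_ne_zero {α : ℝ} {l l' : Link} (h : flink α l l' ≠ 0) :
    linkLen l ≤ linkLen l' := by
  by_contra hlt
  exact h (if_neg fun h' => hlt h'.1)

lemma flink_midpoint_left_eq_one (α : ℝ) {l : Link} (hl : l.1 ≠ l.2) :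
    flink α (midpoint ℝ l.1 l.2, l.2) l = 1 := by
  have hlen : 0 < linkLen l := dist_pos.mpr hl
  have hright : dist (midpoint ℝ l.1 l.2) l.2 = linkLen l / 2 := by
    simp [dist_midpoint_right, linkLen]; ring
  have hleft : dist (midpoint ℝ l.1 l.2) l.1 = linkLen l / 2 := by
    simp [dist_midpoint_left, linkLen]; ring
  have hne : (midpoint ℝ l.1 l.2, l.2) ≠ l := fun h =>
    hl ((midpoint_eq_left_iff ℝ).mp (congrArg Prod.fst h))
  have hhalf : linkLen (midpoint ℝ l.1 l.2, l.2) = linkLen l / 2 := hright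
  rw [flink, if_pos ⟨by rw [hhalf]; linarith, hne⟩, hhalf, hright,
    min_eq_left (show linkLen l / 2 ≤ dist l.1 l.2 by unfold linkLen at hlen ⊢; linarith),
    div_self (Real.rpow_pos_of_pos (by linarith) α).ne', min_self]

lemma Amenable.one_le {α ρ : ℝ} {L : Finset Link} (hA : Amenable α ρ L) {l : Link} (hl : l ∈ L)
    (hnd : l.1 ≠ l.2) : 1 ≤ ρ := by
  have hone := flink_midpoint_left_eq_one α hnd
  calc 1 = flink α (midpoint ℝ l.1 l.2, l.2) l := hone.symm
    _ ≤ ∑ l' ∈ L.filter (fun l' => linkLen (midpoint ℝ l.1 l.2, l.2) ≤ linkLen l'),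
          flink α (midpoint ℝ l.1 l.2, l.2) l' :=
        Finset.single_le_sum (fun l' _ => flink_nonneg α _ l') (Finset.mem_filter.mpr
          ⟨hl, linkLen_le_of_flink_ne_zero (hone ▸ one_ne_zero)⟩)
    _ ≤ ρ := hA _ fun h => hnd ((midpoint_eq_right_iff ℝ).mp h)

lemma Amenable.sum_sum_flink_le {α ρ : ℝ} {L : Finset Link} (hA : Amenable α ρ L)
    (hnd : ∀ l ∈ L, l.1 ≠ l.2) : ∑ v ∈ L, ∑ l ∈ L, flink α l v ≤ ρ * L.card := by
  rw [Finset.sum_comm]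
  calc ∑ l ∈ L, ∑ v ∈ L, flink α l v ≤ ∑ _l ∈ L, ρ := Finset.sum_le_sum fun l hl => by
        rw [← Finset.sum_filter_of_ne fun v _ => linkLen_le_of_flink_ne_zero]
        exact hA l (hnd l hl)
    _ = ρ * L.card := by rw [Finset.sum_const, nsmul_eq_mul, mul_comm]

theorem amenable_has_large_feasible_subset_general (α β ρ : ℝ) (hα : 2 < α) (hβ : 1 ≤ β)
    (γ : ℝ) (hγ : γ = 1 / (4 * 3 ^ α * (4 * β + 2)))
    (L : Finset Link) (hnd : ∀ l ∈ L, l.1 ≠ l.2) (hA : Amenable α ρ L) :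
    ∃ S ⊆ L, γ * L.card / (4 * ρ) ≤ (S.card : ℝ) ∧
      ∀ l' ∈ S,
        ∑ l ∈ S.filter (fun l => linkLen l ≤ linkLen l'), flink α l l' ≤ γ := by
  rcases L.eq_empty_or_nonempty with rfl | ⟨l₀, hl₀⟩
  · exact ⟨∅, subset_rfl, by simp, by simp⟩
  have hρ : 1 ≤ ρ := hA.one_le hl₀ (hnd l₀ hl₀)
  have hD : 24 ≤ 4 * (3 : ℝ) ^ α * (4 * β + 2) := by
    nlinarith [Real.one_le_rpow (by norm_num : (1 : ℝ) ≤ 3) (by linarith : 0 ≤ α)]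
  have hγ₀ : 0 < γ := by rw [hγ]; positivity
  have hγρ : γ < 2 * ρ := by
    rw [hγ, div_lt_iff₀ (by positivity)]
    nlinarith
  obtain ⟨S, hSL, hcard, hS⟩ := exists_large_subset_of_sum_sum_le L (flink_nonneg α)
    (flink_self α) hγ₀ hγρ (hA.sum_sum_flink_le hnd)
  refine ⟨S, hSL, hcard, fun l' hl' => ?_⟩
  rw [Finset.sum_filter_of_ne fun l _ => linkLen_le_of_flink_ne_zero]
  exact hS l' hl'

/-- every `ρ`-amenable set `L` of `n` links contains a subset `S`
of at least `γ·n/(4ρ)` links all of which satisfy Kesselheim's condition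
`Σ_{ℓ ∈ S, ℓ ≤ ℓ'} f_ℓ(ℓ') ≤ γ`; in particular, `Ω(n)` links of `L` can be
scheduled in a single slot. -/
theorem amenable_has_large_feasible_subset (α β ρ : ℝ) (hα : 2 < α) (hβ : 1 ≤ β)
    (hρ : 0 < ρ) (γ : ℝ) (hγ : γ = 1 / (4 * 3 ^ α * (4 * β + 2)))
    (L : Finset Link) (hnd : ∀ l ∈ L, l.1 ≠ l.2) (hA : Amenable α ρ L) :
    ∃ S ⊆ L, γ * L.card / (4 * ρ) ≤ (S.card : ℝ) ∧
      ∀ l' ∈ S,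
        ∑ l ∈ S.filter (fun l => linkLen l ≤ linkLen l'), flink α l l' ≤ γ :=
  amenable_has_large_feasible_subset_general α β ρ hα hβ γ hγ L hnd hA
end
end

section
/- Let P be a finite point set in ℝ², let T be a minimum spanning tree of P, and let P' be the set of points of P that are incident to at least one edge of T of length at least 1. Then every closed disc of radius 1/4 contains at most 9 points of P'. -/
open scoped Classical
noncomputable section

/-!
If `p` has an MST neighbour `q` with `|pq| ≥ 1`, deleting the edge `pq` splits the tree in two.
A point `p'` of `P` with `|pp'| < |pq|` lies on the side of `p` (otherwise `pp'` would reconnect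
the tree more cheaply), and so does every tree neighbour `q'` of `p'`; by the cut property
`|pq| ≤ |qq'|`.

Suppose ten points `pᵢ` of `P'` lie in the disc of radius `1/4` about `c`, with far neighbours
`qᵢ`. Then `|qᵢc| ≥ 3/4`, and by pigeonhole two of the `qᵢ` are seen from `c` under an angle of at
most `π/5`. If `|qⱼc| ≤ |qᵢc|`, the law of cosines gives `|qᵢqⱼ| < |qᵢc| - 1/4 ≤ |pᵢqᵢ|`,
contradicting the cut property since `|pᵢpⱼ| ≤ 1/2`.
-/

namespace SimpleGraph

variable {V : Type*} {T : SimpleGraph V}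

theorem Preconnected.reachable_or_reachable_deleteEdges (hT : T.Preconnected) (a b x : V) :
    (T.deleteEdges {s(a, b)}).Reachable x a ∨ (T.deleteEdges {s(a, b)}).Reachable x b := by
  refine Relation.ReflTransGen.head_induction_on ((reachable_iff_reflTransGen x a).mp (hT x a))
    (.inl (Reachable.refl a)) fun {x y} hxy _ ih => ?_
  by_cases he : s(x, y) = s(a, b)
  · rcases Sym2.eq_iff.mp he with ⟨rfl, -⟩ | ⟨rfl, -⟩
    exacts [.inl .rfl, .inr .rfl]
  · have hadj : (T.deleteEdges {s(a, b)}).Adj x y := deleteEdges_adj.mpr ⟨hxy, he⟩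
    exact ih.imp hadj.reachable.trans hadj.reachable.trans

theorem IsTree.deleteEdges_sup_edge (hT : T.IsTree) {a b u v : V}
    (huv : ¬ (T.deleteEdges {s(a, b)}).Reachable u v) :
    (T.deleteEdges {s(a, b)} ⊔ edge u v).IsTree := by
  set G := T.deleteEdges {s(a, b)}
  have hreach := hT.connected.preconnected.reachable_or_reachable_deleteEdges a b
  have hle : G ≤ G ⊔ edge u v := le_sup_left
  have huv' : (G ⊔ edge u v).Reachable u v :=
    Adj.reachable <| Or.inr <|
      (edge_adj u v u v).mpr ⟨.inl ⟨rfl, rfl⟩, by rintro rfl; exact huv .rfl⟩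
  have hab : (G ⊔ edge u v).Reachable a b := by
    rcases hreach u with hu | hu <;> rcases hreach v with hv | hv
    · exact absurd (hu.trans hv.symm) huv
    · exact (hu.symm.mono hle).trans (huv'.trans (hv.mono hle))
    · exact (hv.symm.mono hle).trans (huv'.symm.trans (hu.mono hle))
    · exact absurd (hu.trans hv.symm) huv
  refine ⟨(connected_iff_exists_forall_reachable _).mpr ⟨a, fun x => ?_⟩,
    (hT.isAcyclic.anti (deleteEdges_le _)).sup_edge_of_not_reachable huv⟩
  rcases hreach x with hx | hx
  exacts [(hx.mono hle).symm, hab.trans (hx.mono hle).symm]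

end SimpleGraph

section MinimumSpanningTree

variable {P : Finset Point} {T : SimpleGraph ↥P}

theorem treeWeight_sup_of_disjoint {G H : SimpleGraph ↥P} (hGH : Disjoint G H) :
    treeWeight P (G ⊔ H) = treeWeight P G + treeWeight P H := by
  simp only [treeWeight, ← mul_add, ← Finset.sum_add_distrib]
  congr 1
  refine Finset.sum_congr rfl fun p _ => Finset.sum_congr rfl fun q _ => ?_
  have : ¬ (G.Adj p q ∧ H.Adj p q) := fun h => hGH.le_bot h
  by_cases hG : G.Adj p q <;> by_cases hH : H.Adj p q <;> simp_all

theorem treeWeight_edge {u v : ↥P} (huv : u ≠ v) :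
    treeWeight P (SimpleGraph.edge u v) = dist (u : Point) v := by
  calc treeWeight P (SimpleGraph.edge u v)
      = 1 / 2 * ∑ p ∈ P.attach, ∑ q ∈ P.attach,
          ((if p = u ∧ q = v then dist (u : Point) v else 0) +
            (if p = v ∧ q = u then dist (u : Point) v else 0)) := by
        unfold treeWeight
        congr! 3 with p - q -
        simp only [SimpleGraph.edge_adj]
        split_ifs <;> grind [dist_comm]
    _ = dist (u : Point) v := by
        simp [Finset.sum_add_distrib, ite_and, Finset.sum_ite_irrel]
        ring

theorem IsMST.dist_le_of_not_reachable (hT : IsMST P T) {a b u v : ↥P} (hab : T.Adj a b)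
    (huv : ¬ (T.deleteEdges {s(a, b)}).Reachable u v) :
    dist (a : Point) b ≤ dist (u : Point) v := by
  set G := T.deleteEdges {s(a, b)}
  have hne : u ≠ v := by rintro rfl; exact huv .rfl
  have hweight : treeWeight P T = treeWeight P G + dist (a : Point) b := by
    rw [← treeWeight_edge hab.ne,
      ← treeWeight_sup_of_disjoint (G := G) (H := SimpleGraph.edge a b) disjoint_sdiff_self_left]
    exact congrArg _ (sdiff_sup_cancel ((T.edge_le_iff).mpr (.inr hab))).symm
  have hmin := hT.2 _ (hT.1.deleteEdges_sup_edge huv)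
  rw [treeWeight_sup_of_disjoint ((G.disjoint_edge).mpr fun h => huv h.reachable),
    treeWeight_edge hne, hweight] at hmin
  linarith

theorem IsMST.dist_le_dist_of_adj (hT : IsMST P T) {p q p' q' : ↥P} (hpq : T.Adj p q)
    (hpq' : T.Adj p' q') (hpp' : p ≠ p') (hclose : dist (p : Point) p' < dist (p : Point) q) :
    dist (p : Point) q ≤ dist (q : Point) q' := by
  set G := T.deleteEdges {s(p, q)}
  have hbridge : ¬ G.Reachable p q :=
    SimpleGraph.isAcyclic_iff_forall_adj_isBridge.mp hT.1.isAcyclic hpq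
  have hpp'G : G.Reachable p p' := by
    by_contra h
    exact (hT.dist_le_of_not_reachable hpq h).not_gt hclose
  have hedge : s(p', q') ≠ s(p, q) := by
    rintro heq
    rcases Sym2.eq_iff.mp heq with ⟨rfl, -⟩ | ⟨rfl, -⟩
    exacts [hpp' rfl, hclose.false]
  have hq'G : G.Reachable p q' :=
    hpp'G.trans (SimpleGraph.deleteEdges_adj.mpr ⟨hpq', hedge⟩).reachable
  exact hT.dist_le_of_not_reachable hpq fun h => hbridge (hq'G.trans h.symm)

end MinimumSpanningTree

open Real

theorem Fin.mul_le_sub_zero_of_forall_le_sub_castSucc {m : ℕ} {g : Fin (m + 1) → ℝ} {δ : ℝ}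
    (hg : ∀ k : Fin m, δ ≤ g k.succ - g k.castSucc) (k : Fin (m + 1)) :
    k * δ ≤ g k - g 0 := by
  induction k using Fin.induction with
  | zero => simp
  | succ k ih =>
    have := hg k
    simp only [Fin.val_succ, Fin.val_castSucc, Nat.cast_add, Nat.cast_one] at ih ⊢
    linarith

theorem exists_ne_cos_le_cos_sub {n : ℕ} (hn : 2 ≤ n) (θ : Fin n → ℝ)
    (hθ : ∀ i, θ i ∈ Set.Ioc (-π) π) :
    ∃ i j, i ≠ j ∧ cos (2 * π / n) ≤ cos (θ i - θ j) := by
  -- Sort the angles: either two neighbours are within `2π/n`, or the largest and the smallest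
  -- are within `2π/n` of each other the other way round the circle.
  obtain ⟨m, rfl⟩ : ∃ m, n = m + 1 := ⟨n - 1, by omega⟩
  set σ := Tuple.sort θ
  set g := θ ∘ σ
  have hstep : 2 * π / (m + 1 : ℕ) ≤ π := by
    rw [div_le_iff₀ (by positivity)]
    have : (2 : ℝ) ≤ (m + 1 : ℕ) := by exact_mod_cast hn
    nlinarith [pi_pos]
  by_cases hgap : ∃ k : Fin m, g k.succ - g k.castSucc ≤ 2 * π / (m + 1 : ℕ)
  · obtain ⟨k, hk⟩ := hgap
    refine ⟨σ k.succ, σ k.castSucc, σ.injective.ne (Fin.castSucc_lt_succ (i := k)).ne', ?_⟩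
    exact cos_le_cos_of_nonneg_of_le_pi
      (sub_nonneg.mpr (Tuple.monotone_sort θ (Fin.castSucc_le_succ k))) hstep hk
  · push Not at hgap
    refine ⟨σ (Fin.last m), σ 0, σ.injective.ne (by simp [Fin.ext_iff]; omega), ?_⟩
    have hspread := Fin.mul_le_sub_zero_of_forall_le_sub_castSucc (fun k => (hgap k).le)
      (Fin.last m)
    have hmax := (hθ (σ (Fin.last m))).2
    have hmin := (hθ (σ 0)).1
    simp only [Fin.val_last, g, Function.comp_apply] at hspread
    push_cast at hspread hstep ⊢
    have hsplit : (m : ℝ) * (2 * π / (m + 1)) = 2 * π - 2 * π / (m + 1) := by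
      field_simp
      ring
    rw [← cos_two_pi_sub (θ _ - θ _)]
    exact cos_le_cos_of_nonneg_of_le_pi (by linarith) hstep (by linarith)

theorem Complex.norm_sub_sq_eq (x y : ℂ) :
    ‖x - y‖ ^ 2 = ‖x‖ ^ 2 + ‖y‖ ^ 2 - 2 * ‖x‖ * ‖y‖ * Real.cos (x.arg - y.arg) := by
  calc ‖x - y‖ ^ 2 = ‖x‖ ^ 2 + ‖y‖ ^ 2 - 2 * (x.re * y.re + x.im * y.im) := by
        rw [Complex.sq_norm, Complex.sq_norm, Complex.sq_norm, Complex.normSq_sub]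
        simp only [Complex.mul_re, Complex.conj_re, Complex.conj_im]
        ring
    _ = _ := by
        rw [Real.cos_sub, ← Complex.norm_mul_cos_arg x, ← Complex.norm_mul_sin_arg x,
          ← Complex.norm_mul_cos_arg y, ← Complex.norm_mul_sin_arg y]
        ring

theorem sq_add_sq_sub_mul_cos_lt {r s C : ℝ} (hs : 3 / 4 ≤ s) (hsr : s ≤ r) (hC : 7 / 9 < C) :
    r ^ 2 + s ^ 2 - 2 * r * s * C < (r - 1 / 4) ^ 2 := by
  have hr : 3 / 4 ≤ r := hs.trans hsr
  have hrsC : 14 / 9 * (r * s) < 2 * r * s * C := by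
    nlinarith [mul_pos (by positivity : 0 < r * s) (sub_pos.mpr hC)]
  nlinarith [mul_nonneg (sub_nonneg.mpr hs) (sub_nonneg.mpr hsr),
    mul_nonneg (sub_nonneg.mpr hr) (sub_nonneg.mpr hsr),
    mul_nonneg (sub_nonneg.mpr hr) (sub_nonneg.mpr hs)]

theorem seven_ninths_lt_cos_pi_div_five : 7 / 9 < cos (π / 5) := by
  have h5 : √5 ^ 2 = 5 := Real.sq_sqrt (by norm_num)
  rw [cos_pi_div_five]
  nlinarith [Real.sqrt_nonneg 5]

theorem exists_dist_lt_of_fin_ten (c : Point) (p q : Fin 10 → Point)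
    (hp : ∀ i, dist (p i) c ≤ 1 / 4) (hpq : ∀ i, 1 ≤ dist (p i) (q i)) :
    ∃ i j, i ≠ j ∧ dist (q i) (q j) < dist (p i) (q i) := by
  set e := Complex.orthonormalBasisOneI.repr.symm
  set x : Fin 10 → ℂ := fun i => e (q i - c)
  have hnorm : ∀ i, ‖x i‖ = dist (q i) c := fun i => by simp only [x, e.norm_map, dist_eq_norm]
  have hfar : ∀ i, 3 / 4 ≤ ‖x i‖ := fun i => by
    linarith [hnorm i, hp i, hpq i, dist_triangle (p i) c (q i), dist_comm c (q i)]
  have hlen : ∀ i, ‖x i‖ - 1 / 4 ≤ dist (p i) (q i) := fun i => by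
    linarith [hnorm i, hp i, dist_triangle (q i) (p i) c, dist_comm (q i) (p i)]
  have hclose : ∀ i j, ‖x j‖ ≤ ‖x i‖ → cos (π / 5) ≤ cos ((x i).arg - (x j).arg) →
      dist (q i) (q j) < dist (p i) (q i) := by
    intro i j hji hcos
    have hdist : dist (q i) (q j) = ‖x i - x j‖ := by
      simp only [x, ← map_sub, e.norm_map, dist_eq_norm, sub_sub_sub_cancel_right]
    have hsq : ‖x i - x j‖ ^ 2 < (‖x i‖ - 1 / 4) ^ 2 := by
      rw [Complex.norm_sub_sq_eq]
      exact sq_add_sq_sub_mul_cos_lt (hfar j) hji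
        (seven_ninths_lt_cos_pi_div_five.trans_le hcos)
    rw [hdist]
    exact (abs_lt_of_sq_lt_sq' hsq (by linarith [hfar i])).2.trans_le (hlen i)
  obtain ⟨i, j, hij, hcos⟩ := exists_ne_cos_le_cos_sub (n := 10) (by norm_num)
    (fun i => (x i).arg) fun i => ⟨Complex.neg_pi_lt_arg _, Complex.arg_le_pi _⟩
  rw [show 2 * π / ((10 : ℕ) : ℝ) = π / 5 by push_cast; ring] at hcos
  rcases le_total ‖x j‖ ‖x i‖ with h | h
  · exact ⟨i, j, hij, hclose i j h hcos⟩
  · exact ⟨j, i, hij.symm, hclose j i h (by rwa [← neg_sub, cos_neg])⟩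

/-- if `T` is a minimum spanning tree of `P` and `P'` is the set
of points of `P` incident to at least one edge of `T` of length at least `1`,
then every closed disc of radius `1/4` contains at most `9` points of `P'`. -/
theorem few_mst_points_in_small_disc (P : Finset Point) (T : SimpleGraph ↥P)
    (hT : IsMST P T) (c : Point) :
    (P.attach.filter (fun p : ↥P =>
        dist (p : Point) c ≤ 1 / 4 ∧
        ∃ q : ↥P, T.Adj p q ∧ 1 ≤ dist (p : Point) (q : Point))).card ≤ 9 := by
  set S := P.attach.filter (fun p : ↥P =>
    dist (p : Point) c ≤ 1 / 4 ∧ ∃ q : ↥P, T.Adj p q ∧ 1 ≤ dist (p : Point) (q : Point))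
  by_contra! hcard
  obtain ⟨f⟩ : Nonempty (Fin 10 ↪ S) := Function.Embedding.nonempty_of_card_le
    (by rw [Fintype.card_fin, Fintype.card_coe]; exact hcard)
  set p : Fin 10 → ↥P := fun i => f i
  have hp i := (Finset.mem_filter.mp (f i).2).2
  choose q hq using fun i => (hp i).2
  obtain ⟨i, j, hij, hlt⟩ := exists_dist_lt_of_fin_ten c (fun i => p i) (fun i => q i)
    (fun i => (hp i).1) (fun i => (hq i).2)
  have hclose : dist (p i : Point) (p j) < dist (p i : Point) (q i) := by
    linarith [dist_triangle_right (p i : Point) (p j) c, (hp i).1, (hp j).1, (hq i).2]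
  exact hlt.not_ge <| hT.dist_le_dist_of_adj (hq i).1 (hq j).1
    (fun h => hij (f.injective (Subtype.ext h))) hclose
end
end

section
/- Let x₀ = 0, x₁ = 1, and x_i = 2·x_{i−1}² for i ≥ 2, regarded as n collinear points in ℝ². Then for any two disjoint pairs {x_i, x_j} and {x_k, x_m} of these points and any symmetric power assignment (one positive power per pair, used in both directions), the two pairs are not simultaneously bidirectionally feasible: at least one of the four SINR constraints fails. Consequently, any set of pairs whose links strongly connect these n points requires at least n − 1 slots in the symmetric bidirectional model. -/
open scoped Classical
noncomputable section

/-- A bidirectional pair `{u,v}` is represented by an ordered pair `l = (u,v)`;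
its two constituent links are `l₁ = (u,v)` and `l₂ = (v,u)`, with powers
`(Pw l).1` and `(Pw l).2`. `BidiFeasibleWith α β L Pw` states that both SINR
constraints of every pair of `L` hold, interference being summed over both
directions of all other pairs (the two links of one pair do not interfere
with each other). -/
def BidiFeasibleWith (α β : ℝ) (L : Finset Link) (Pw : Link → ℝ × ℝ) : Prop :=
  ∀ l ∈ L,
    (β * ∑ l' ∈ L.erase l,
        ((Pw l').1 / dist l'.1 l.2 ^ α + (Pw l').2 / dist l'.2 l.2 ^ α)
      ≤ (Pw l).1 / linkLen l ^ α) ∧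
    (β * ∑ l' ∈ L.erase l,
        ((Pw l').1 / dist l'.1 l.1 ^ α + (Pw l').2 / dist l'.2 l.1 ^ α)
      ≤ (Pw l).2 / linkLen l ^ α)

/-- Bidirectional feasibility in the asymmetric model: the two directions of a
pair may use different (positive) powers. -/
def BidiFeasible (α β : ℝ) (L : Finset Link) : Prop :=
  ∃ Pw : Link → ℝ × ℝ, (∀ l ∈ L, 0 < (Pw l).1 ∧ 0 < (Pw l).2) ∧
    BidiFeasibleWith α β L Pw

/-- Bidirectional feasibility in the symmetric model: the two directions of
each pair must use the same (positive) power. -/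
def SymBidiFeasible (α β : ℝ) (L : Finset Link) : Prop :=
  ∃ Pw : Link → ℝ × ℝ, (∀ l ∈ L, 0 < (Pw l).1 ∧ (Pw l).1 = (Pw l).2) ∧
    BidiFeasibleWith α β L Pw

/-- The point `(r, 0)` on the x-axis of the Euclidean plane. -/
def ptOnLine (r : ℝ) : Point := (EuclideanSpace.equiv (Fin 2) ℝ).symm ![r, 0]

/-!
Multiplying the SINR constraint at an endpoint `b` of one pair by the one at an endpoint `c` of
the other eliminates the symmetric powers: `β² · I(b) · I(c) · (|ℓ| |ℓ'|)^α ≤ 1`, where `I` is the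
interference of the other pair at unit power. Hence two pairs sharing an endpoint never share a
slot, and two disjoint pairs can only if `|ℓ| |ℓ'| ≤ |bc|²`. On the points `xᵢ` this fails for
`b` the partner of the largest point `xᵢ` and `c` any point of the other pair: the other three
points lie in `[0, x_t]` with `t ≥ 2`, while `xᵢ ≥ 2 x_t²`. So each slot serves a single pair,
and a connected graph on `n` vertices has at least `n - 1` edges.
-/

open Finset

lemma dist_ptOnLine (r s : ℝ) : dist (ptOnLine r) (ptOnLine s) = |r - s| := by
  simp [ptOnLine, EuclideanSpace.dist_eq, Fin.sum_univ_two, Real.dist_eq, Real.sqrt_sq_eq_abs]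

lemma ptOnLine_injective : Function.Injective ptOnLine := fun r s h => by
  simpa [sub_eq_zero] using (dist_ptOnLine r s).symm.trans (dist_eq_zero.mpr h)

def pairInterference (α : ℝ) (l : Link) (y : Point) : ℝ :=
  (dist l.1 y ^ α)⁻¹ + (dist l.2 y ^ α)⁻¹

lemma pairInterference_of_ends {α : ℝ} {l : Link} {a b : Point} (hl : l = (a, b) ∨ l = (b, a))
    (y : Point) : pairInterference α l y = (dist a y ^ α)⁻¹ + (dist b y ^ α)⁻¹ := by
  rcases hl with rfl | rfl
  · rfl
  · exact add_comm _ _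

lemma linkLen_of_ends {l : Link} {a b : Point} (hl : l = (a, b) ∨ l = (b, a)) :
    linkLen l = dist a b := by
  rcases hl with rfl | rfl
  · rfl
  · exact dist_comm _ _

lemma inv_dist_rpow_le_pairInterference (α : ℝ) {l : Link} {c : Point} (hc : c = l.1 ∨ c = l.2)
    (y : Point) : (dist c y ^ α)⁻¹ ≤ pairInterference α l y := by
  have h₁ : 0 ≤ (dist l.1 y ^ α)⁻¹ := by positivity
  have h₂ : 0 ≤ (dist l.2 y ^ α)⁻¹ := by positivity
  rcases hc with rfl | rfl <;> unfold pairInterference <;> linarith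

lemma SymBidiFeasible.mono {α β : ℝ} (hβ : 0 ≤ β) {T T' : Finset Link} (h : T' ⊆ T)
    (hT : SymBidiFeasible α β T) : SymBidiFeasible α β T' := by
  obtain ⟨Pw, hpos, hfeas⟩ := hT
  refine ⟨Pw, fun l hl => hpos l (h hl), fun l hl => ?_⟩
  have hsum : ∀ y : Point,
      ∑ l' ∈ T'.erase l, ((Pw l').1 / dist l'.1 y ^ α + (Pw l').2 / dist l'.2 y ^ α)
        ≤ ∑ l' ∈ T.erase l, ((Pw l').1 / dist l'.1 y ^ α + (Pw l').2 / dist l'.2 y ^ α) := by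
    intro y
    refine sum_le_sum_of_subset_of_nonneg (erase_subset_erase _ h) fun l' hl' _ => ?_
    obtain ⟨hP, hsym⟩ := hpos l' (mem_of_mem_erase hl')
    rw [← hsym]
    positivity
  obtain ⟨h₁, h₂⟩ := hfeas l (h hl)
  exact ⟨(mul_le_mul_of_nonneg_left (hsum l.2) hβ).trans h₁,
    (mul_le_mul_of_nonneg_left (hsum l.1) hβ).trans h₂⟩

lemma BidiFeasibleWith.mul_pairInterference_le {α β : ℝ} {l l' : Link} {Pw : Link → ℝ × ℝ}
    (h : BidiFeasibleWith α β {l, l'} Pw) (hne : l ≠ l') (hl : (Pw l).1 = (Pw l).2)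
    (hl' : (Pw l').1 = (Pw l').2) {b : Point} (hb : b = l.1 ∨ b = l.2) :
    β * ((Pw l').1 * pairInterference α l' b) ≤ (Pw l).1 / linkLen l ^ α := by
  have herase : ({l, l'} : Finset Link).erase l = {l'} := erase_insert (by simpa using hne)
  obtain ⟨h₁, h₂⟩ := h l (mem_insert_self _ _)
  rw [herase, sum_singleton, ← hl'] at h₁ h₂
  rw [← hl] at h₂
  rcases hb with rfl | rfl
  · simpa [pairInterference, mul_add, div_eq_mul_inv] using h₂
  · simpa [pairInterference, mul_add, div_eq_mul_inv] using h₁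

lemma SymBidiFeasible.pairInterference_mul_le_one {α β : ℝ} (hβ : 0 ≤ β) {l l' : Link}
    (h : SymBidiFeasible α β {l, l'}) (hne : l ≠ l') {b c : Point}
    (hb : b = l.1 ∨ b = l.2) (hc : c = l'.1 ∨ c = l'.2) :
    β ^ 2 * (pairInterference α l' b * pairInterference α l c) *
      (linkLen l ^ α * linkLen l' ^ α) ≤ 1 := by
  obtain ⟨Pw, hpos, hfeas⟩ := h
  obtain ⟨hP, hPsym⟩ := hpos l (mem_insert_self _ _)
  obtain ⟨hQ, hQsym⟩ := hpos l' (mem_insert_of_mem (mem_singleton_self _))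
  have hfeas' : BidiFeasibleWith α β {l', l} Pw := pair_comm l l' ▸ hfeas
  have hI : 0 ≤ pairInterference α l' b := by unfold pairInterference; positivity
  have hI' : 0 ≤ pairInterference α l c := by unfold pairInterference; positivity
  have hA : 0 ≤ linkLen l ^ α := by unfold linkLen; positivity
  have hA' : 0 ≤ linkLen l' ^ α := by unfold linkLen; positivity
  have hX := mul_le_of_le_div₀ hP.le hA (hfeas.mul_pairInterference_le hne hPsym hQsym hb)
  have hY := mul_le_of_le_div₀ hQ.le hA' (hfeas'.mul_pairInterference_le hne.symm hQsym hPsym hc)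
  have hXY := mul_le_mul hX hY (by positivity) hP.le
  refine le_of_mul_le_mul_right ?_ (mul_pos hP hQ)
  calc _ = β * ((Pw l').1 * pairInterference α l' b) * linkLen l ^ α *
        (β * ((Pw l).1 * pairInterference α l c) * linkLen l' ^ α) := by ring
    _ ≤ (Pw l).1 * (Pw l').1 := hXY
    _ = _ := by ring

lemma not_symBidiFeasible_of_sq_dist_lt {α β : ℝ} (hα : 0 < α) (hβ : 1 ≤ β) {l l' : Link}
    (hne : l ≠ l') {b c : Point} (hb : b = l.1 ∨ b = l.2) (hc : c = l'.1 ∨ c = l'.2)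
    (hbc : b ≠ c) (hlt : dist b c ^ 2 < linkLen l * linkLen l') :
    ¬SymBidiFeasible α β {l, l'} := by
  intro h
  have hle := h.pairInterference_mul_le_one (by linarith) hne hb hc
  have hd : 0 < dist b c := dist_pos.mpr hbc
  set E := dist b c ^ α with hE
  set A := linkLen l ^ α * linkLen l' ^ α with hA
  have hE0 : 0 ≤ E⁻¹ := by positivity
  have hI : E⁻¹ ≤ pairInterference α l' b := by
    simpa [hE, dist_comm] using inv_dist_rpow_le_pairInterference α hc b
  have hI' : E⁻¹ ≤ pairInterference α l c := inv_dist_rpow_le_pairInterference α hb c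
  have hII : E⁻¹ * E⁻¹ ≤ β ^ 2 * (pairInterference α l' b * pairInterference α l c) :=
    (mul_le_mul hI hI' hE0 (hE0.trans hI)).trans
      (le_mul_of_one_le_left (mul_nonneg (hE0.trans hI) (hE0.trans hI')) (one_le_pow₀ hβ))
  have hEA : E * E < A := by
    have hL : 0 ≤ linkLen l := dist_nonneg
    have hL' : 0 ≤ linkLen l' := dist_nonneg
    rw [hE, hA, ← Real.mul_rpow hd.le hd.le, ← Real.mul_rpow hL hL', ← sq]
    exact Real.rpow_lt_rpow (by positivity) hlt hα
  have hgt : 1 < E⁻¹ * E⁻¹ * A := by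
    rw [← mul_inv, inv_mul_eq_div, one_lt_div (by positivity)]
    exact hEA
  linarith [mul_le_mul_of_nonneg_right hII ((mul_self_nonneg E).trans hEA.le)]

lemma not_symBidiFeasible_of_shared_endpoint {α β : ℝ} (hβ : 1 ≤ β) {l l' : Link}
    {a b d : Point} (hab : a ≠ b) (had : a ≠ d) (hbd : b ≠ d) (hl : l = (a, b) ∨ l = (b, a))
    (hl' : l' = (a, d) ∨ l' = (d, a)) : ¬SymBidiFeasible α β {l, l'} := by
  intro h
  have hne : l ≠ l' := by
    rcases hl with rfl | rfl <;> rcases hl' with rfl | rfl <;>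
      simp [Prod.ext_iff, hab.symm, had, hbd]
  have hb : b = l.1 ∨ b = l.2 := by rcases hl with rfl | rfl <;> simp
  have hd : d = l'.1 ∨ d = l'.2 := by rcases hl' with rfl | rfl <;> simp
  have key := h.pairInterference_mul_le_one (by linarith) hne hb hd
  rw [pairInterference_of_ends hl', pairInterference_of_ends hl, linkLen_of_ends hl,
    linkLen_of_ends hl', dist_comm d b] at key
  set A := dist a b ^ α
  set A' := dist a d ^ α
  set E := dist b d ^ α
  have hA : 0 < A := by have := dist_pos.mpr hab; positivity
  have hA' : 0 < A' := by have := dist_pos.mpr had; positivity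
  have hE : 0 < E := by have := dist_pos.mpr hbd; positivity
  -- The shared endpoint alone contributes `A⁻¹`, which already balances the pair's own path loss.
  have h₁ : 1 < (A⁻¹ + E⁻¹) * A := by
    rw [add_mul, inv_mul_cancel₀ hA.ne']
    linarith [mul_pos (inv_pos.mpr hE) hA]
  have h₂ : 1 < (A'⁻¹ + E⁻¹) * A' := by
    rw [add_mul, inv_mul_cancel₀ hA'.ne']
    linarith [mul_pos (inv_pos.mpr hE) hA']
  have hprod := one_lt_mul_of_le_of_lt h₁.le h₂
  have hscale := le_mul_of_one_le_left (zero_le_one.trans hprod.le) (one_le_pow₀ (n := 2) hβ)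
  have : β ^ 2 * ((A⁻¹ + E⁻¹) * (A'⁻¹ + E⁻¹)) * (A * A') =
      β ^ 2 * ((A⁻¹ + E⁻¹) * A * ((A'⁻¹ + E⁻¹) * A')) := by ring
  linarith

lemma reachable_fromRel_of_reflTransGen {n : ℕ} {p : Fin n → Point} (hp : Function.Injective p)
    {L : Finset Link} (hL : ∀ l ∈ L, (∃ i, l.1 = p i) ∧ (∃ j, l.2 = p j) ∧ l.1 ≠ l.2)
    {i j : Fin n} (h : Relation.ReflTransGen (fun u v => (u, v) ∈ L ∨ (v, u) ∈ L) (p i) (p j)) :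
    (SimpleGraph.fromRel fun i j => (p i, p j) ∈ L).Reachable i j := by
  suffices ∀ u, Relation.ReflTransGen (fun u v => (u, v) ∈ L ∨ (v, u) ∈ L) u (p j) →
      ∀ i, u = p i → (SimpleGraph.fromRel fun i j => (p i, p j) ∈ L).Reachable i j from
    this _ h i rfl
  intro u hu
  induction hu using Relation.ReflTransGen.head_induction_on with
  | refl => exact fun i hi => hp hi ▸ SimpleGraph.Reachable.refl _
  | @head u v huv _ ih =>
    rintro i rfl
    have hstep : ∃ m, v = p m ∧ p i ≠ p m := by
      rcases huv with huv | huv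
      · obtain ⟨-, ⟨m, hm⟩, hne⟩ := hL _ huv
        exact ⟨m, hm, hm ▸ hne⟩
      · obtain ⟨⟨m, hm⟩, -, hne⟩ := hL _ huv
        exact ⟨m, hm, hm ▸ hne.symm⟩
    obtain ⟨m, rfl, hne⟩ := hstep
    refine SimpleGraph.Adj.reachable ?_ |>.trans (ih m rfl)
    exact (SimpleGraph.fromRel_adj _ _ _).mpr ⟨fun h => hne (congrArg p h), huv⟩

section Tower

variable {x : ℕ → ℝ}

lemma tower_succ_eq (hrec : ∀ i, 2 ≤ i → x i = 2 * x (i - 1) ^ 2) {t : ℕ} (ht : 1 ≤ t) :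
    x (t + 1) = 2 * x t ^ 2 := by
  simpa using hrec (t + 1) (by omega)

variable (h0 : x 0 = 0) (h1 : x 1 = 1) (hrec : ∀ i, 2 ≤ i → x i = 2 * x (i - 1) ^ 2)
include h0 h1 hrec

lemma tower_add_one_le_succ (p : ℕ) : x p + 1 ≤ x (p + 1) := by
  suffices ∀ p, 1 ≤ x (p + 1) ∧ x p + 1 ≤ x (p + 1) from (this p).2
  intro p
  induction p with
  | zero => simp [h0, h1]
  | succ p ih =>
    rw [tower_succ_eq hrec (by omega : 1 ≤ p + 1)]
    constructor <;> nlinarith [ih.1]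

lemma tower_add_one_le_of_lt {p q : ℕ} (hpq : p < q) : x p + 1 ≤ x q := by
  induction q, hpq using Nat.le_induction with
  | base => exact tower_add_one_le_succ h0 h1 hrec p
  | succ q _ ih => linarith [tower_add_one_le_succ h0 h1 hrec q]

lemma tower_strictMono : StrictMono x :=
  strictMono_nat_of_lt_succ fun p => by linarith [tower_add_one_le_succ h0 h1 hrec p]

lemma tower_nonneg (p : ℕ) : 0 ≤ x p :=
  h0 ▸ (tower_strictMono h0 h1 hrec).monotone (Nat.zero_le p)

lemma one_le_abs_tower_sub {p q : ℕ} (hpq : p ≠ q) : 1 ≤ |x p - x q| := by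
  rcases hpq.lt_or_gt with h | h
  · rw [abs_sub_comm]
    linarith [le_abs_self (x q - x p), tower_add_one_le_of_lt h0 h1 hrec h]
  · linarith [le_abs_self (x p - x q), tower_add_one_le_of_lt h0 h1 hrec h]

lemma tower_sq_dist_lt {i j k m : ℕ} (hj : j < i) (hk : k < i) (hm : m < i)
    (hjk : j ≠ k) (hjm : j ≠ m) (hkm : k ≠ m) :
    |x j - x k| ^ 2 < |x i - x j| * |x k - x m| := by
  have mono := (tower_strictMono h0 h1 hrec).monotone
  set t := max j (max k m)
  have hx2 : x 2 = 2 := by simpa [h1] using tower_succ_eq hrec (le_refl 1)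
  have hxt : 2 ≤ x t := hx2 ▸ mono (by omega)
  have hxi : 2 * x t ^ 2 ≤ x i := tower_succ_eq hrec (by omega : 1 ≤ t) ▸ mono (by omega)
  have hxj : x j ≤ x t := mono (by omega)
  have hxk : x k ≤ x t := mono (by omega)
  have hjk' : |x j - x k| ≤ x t := abs_sub_le_iff.mpr
    ⟨by linarith [tower_nonneg h0 h1 hrec k], by linarith [tower_nonneg h0 h1 hrec j]⟩
  have hij : 2 * x t ^ 2 - x t ≤ |x i - x j| := by linarith [le_abs_self (x i - x j)]
  have hkm' := one_le_abs_tower_sub h0 h1 hrec hkm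
  nlinarith [abs_nonneg (x j - x k), abs_nonneg (x i - x j)]

lemma tower_pt_injective : Function.Injective fun i => ptOnLine (x i) :=
  ptOnLine_injective.comp (tower_strictMono h0 h1 hrec).injective

theorem not_symBidiFeasible_tower_of_disjoint {α β : ℝ} (hα : 0 < α) (hβ : 1 ≤ β)
    {i j k m : ℕ} (hij : i ≠ j) (hkm : k ≠ m) (hik : i ≠ k) (him : i ≠ m) (hjk : j ≠ k)
    (hjm : j ≠ m) :
    ¬SymBidiFeasible α β
      {(ptOnLine (x i), ptOnLine (x j)), (ptOnLine (x k), ptOnLine (x m))} := by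
  have inj := tower_pt_injective h0 h1 hrec
  have hne : (ptOnLine (x i), ptOnLine (x j)) ≠ (ptOnLine (x k), ptOnLine (x m)) :=
    fun h => hik (inj (congrArg Prod.fst h))
  have hsq := @tower_sq_dist_lt x h0 h1 hrec
  rcases (by omega : (j < i ∧ k < i ∧ m < i) ∨ (i < j ∧ k < j ∧ m < j) ∨
      (i < k ∧ j < k ∧ m < k) ∨ (i < m ∧ j < m ∧ k < m)) with
    ⟨h₁, h₂, h₃⟩ | ⟨h₁, h₂, h₃⟩ | ⟨h₁, h₂, h₃⟩ | ⟨h₁, h₂, h₃⟩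
  · refine not_symBidiFeasible_of_sq_dist_lt hα hβ hne (Or.inr rfl) (Or.inl rfl) (inj.ne hjk) ?_
    simpa [linkLen, dist_ptOnLine] using hsq h₁ h₂ h₃ hjk hjm hkm
  · refine not_symBidiFeasible_of_sq_dist_lt hα hβ hne (Or.inl rfl) (Or.inl rfl) (inj.ne hik) ?_
    simpa [linkLen, dist_ptOnLine, abs_sub_comm] using hsq h₁ h₂ h₃ hik him hkm
  · refine not_symBidiFeasible_of_sq_dist_lt hα hβ hne (Or.inl rfl) (Or.inr rfl) (inj.ne him) ?_
    simpa [linkLen, dist_ptOnLine, abs_sub_comm, mul_comm] using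
      hsq h₃ h₁ h₂ him.symm hjm.symm hij
  · refine not_symBidiFeasible_of_sq_dist_lt hα hβ hne (Or.inl rfl) (Or.inl rfl) (inj.ne hik) ?_
    simpa [linkLen, dist_ptOnLine, abs_sub_comm, mul_comm] using
      hsq h₃ h₁ h₂ hik.symm hjk.symm hij

theorem tower_sym2_eq_of_mem_symBidiFeasible {α β : ℝ} (hα : 0 < α) (hβ : 1 ≤ β) {T : Finset Link}
    (hT : SymBidiFeasible α β T) {i j k m : ℕ} (hij : i ≠ j) (hkm : k ≠ m)
    (hl : (ptOnLine (x i), ptOnLine (x j)) ∈ T) (hl' : (ptOnLine (x k), ptOnLine (x m)) ∈ T) :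
    s(i, j) = s(k, m) := by
  have inj := tower_pt_injective h0 h1 hrec
  have hpair := hT.mono (by linarith) (insert_subset hl (singleton_subset_iff.mpr hl'))
  by_contra hne
  rw [Sym2.eq_iff, not_or, not_and, not_and] at hne
  obtain rfl | hik := eq_or_ne i k
  · exact not_symBidiFeasible_of_shared_endpoint hβ (inj.ne hij) (inj.ne hkm)
      (inj.ne (hne.1 rfl)) (Or.inl rfl) (Or.inl rfl) hpair
  obtain rfl | him := eq_or_ne i m
  · exact not_symBidiFeasible_of_shared_endpoint hβ (inj.ne hij) (inj.ne hkm.symm)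
      (inj.ne (hne.2 rfl)) (Or.inl rfl) (Or.inr rfl) hpair
  obtain rfl | hjk := eq_or_ne j k
  · exact not_symBidiFeasible_of_shared_endpoint hβ (inj.ne hij.symm) (inj.ne hkm)
      (inj.ne him) (Or.inr rfl) (Or.inl rfl) hpair
  obtain rfl | hjm := eq_or_ne j m
  · exact not_symBidiFeasible_of_shared_endpoint hβ (inj.ne hij.symm) (inj.ne hkm.symm)
      (inj.ne hik) (Or.inr rfl) (Or.inr rfl) hpair
  exact not_symBidiFeasible_tower_of_disjoint h0 h1 hrec hα hβ hij hkm hik him hjk hjm hpair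

lemma card_edgeSet_le_of_symBidiFeasible_partition {α β : ℝ} (hα : 0 < α) (hβ : 1 ≤ β) {n : ℕ}
    {L : Finset Link} (hL : ∀ l ∈ L, l.1 ≠ l.2) {k : ℕ} {S : Fin k → Finset Link}
    (hS : IsPartition L S) (hfeas : ∀ a, SymBidiFeasible α β (S a)) :
    Nat.card (SimpleGraph.fromRel
      fun i j : Fin n => (ptOnLine (x i), ptOnLine (x j)) ∈ L).edgeSet ≤ k := by
  rw [Nat.card_eq_card_toFinset, ← Fintype.card_fin k, ← card_univ]
  refine card_le_card_of_forall_subsingleton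
    (fun e a => ∃ i j : Fin n, e = s(i, j) ∧ (ptOnLine (x i), ptOnLine (x j)) ∈ S a) ?_ ?_
  · intro e he
    induction e using Sym2.ind with | h i j => ?_
    rw [Set.mem_toFinset, SimpleGraph.mem_edgeSet, SimpleGraph.fromRel_adj] at he
    rcases he.2 with h | h
    · obtain ⟨a, ha⟩ := hS.2.1 _ h
      exact ⟨a, mem_univ _, i, j, rfl, ha⟩
    · obtain ⟨a, ha⟩ := hS.2.1 _ h
      exact ⟨a, mem_univ _, j, i, Sym2.eq_swap, ha⟩
  · rintro a - e ⟨-, i, j, rfl, hij⟩ e' ⟨-, i', j', rfl, hij'⟩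
    have hne : ∀ {i j : Fin n}, (ptOnLine (x i), ptOnLine (x j)) ∈ S a → (i : ℕ) ≠ j :=
      fun h e => hL _ (hS.1 a h) (by simp [e])
    apply Sym2.map.injective Fin.val_injective
    simpa using
      tower_sym2_eq_of_mem_symBidiFeasible h0 h1 hrec hα hβ (hfeas a) (hne hij) (hne hij') hij hij'

end Tower

/-- for the collinear points `x₀ = 0`, `x₁ = 1`,
`xᵢ = 2·xᵢ₋₁²`, no two disjoint pairs are simultaneously bidirectionally
feasible with symmetric powers; consequently any set of pairs whose links
strongly connect these `n` points needs at least `n − 1` slots in the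
symmetric bidirectional model. -/
theorem symmetric_bidirectional_lower_bound (α β : ℝ) (hα : 2 < α) (hβ : 1 ≤ β)
    (n : ℕ) (x : ℕ → ℝ) (h0 : x 0 = 0) (h1 : x 1 = 1)
    (hrec : ∀ i, 2 ≤ i → x i = 2 * x (i - 1) ^ 2) :
    (∀ i j k m : ℕ, i < n → j < n → k < n → m < n →
      i ≠ j → k ≠ m → i ≠ k → i ≠ m → j ≠ k → j ≠ m →
      ¬SymBidiFeasible α β
        {(ptOnLine (x i), ptOnLine (x j)), (ptOnLine (x k), ptOnLine (x m))}) ∧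
    (∀ L : Finset Link,
      (∀ l ∈ L, (∃ i < n, l.1 = ptOnLine (x i)) ∧
                (∃ j < n, l.2 = ptOnLine (x j)) ∧ l.1 ≠ l.2) →
      (∀ i j : ℕ, i < n → j < n →
        Relation.ReflTransGen (fun u v => (u, v) ∈ L ∨ (v, u) ∈ L)
          (ptOnLine (x i)) (ptOnLine (x j))) →
      ∀ (k : ℕ) (S : Fin k → Finset Link), IsPartition L S →
        (∀ i, SymBidiFeasible α β (S i)) → n - 1 ≤ k) := by
  have hα₀ : 0 < α := by linarith
  refine ⟨fun i j k m _ _ _ _ hij hkm hik him hjk hjm =>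
    not_symBidiFeasible_tower_of_disjoint h0 h1 hrec hα₀ hβ hij hkm hik him hjk hjm, ?_⟩
  intro L hL hconn k S hS hfeas
  obtain rfl | hn := Nat.eq_zero_or_pos n
  · simp
  have hG : (SimpleGraph.fromRel
      fun i j : Fin n => (ptOnLine (x i), ptOnLine (x j)) ∈ L).Connected := by
    refine SimpleGraph.connected_iff_exists_forall_reachable _ |>.mpr ⟨⟨0, hn⟩, fun j => ?_⟩
    refine reachable_fromRel_of_reflTransGen
      ((tower_pt_injective h0 h1 hrec).comp Fin.val_injective) (fun l hl => ?_)
      (hconn 0 j hn j.2)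
    obtain ⟨⟨i, hi, hl₁⟩, ⟨j, hj, hl₂⟩, hne⟩ := hL l hl
    exact ⟨⟨⟨i, hi⟩, hl₁⟩, ⟨⟨j, hj⟩, hl₂⟩, hne⟩
  have hvert := hG.card_vert_le_card_edgeSet_add_one
  have hedge := card_edgeSet_le_of_symBidiFeasible_partition (n := n) h0 h1 hrec hα₀ hβ
    (fun l hl => (hL l hl).2.2) hS hfeas
  rw [Nat.card_fin] at hvert
  omega
end
end

section
/- There is a constant c = c(α, β) such that for every finite point set P ⊆ ℝ² whose minimum spanning tree edges all have length at least 1, any orientation of the MST into links can be partitioned into at most c·g sets, each of which satisfies the SINR constraints when all links are assigned one common power (uniform power). Here g = |{⌈log₂ ℓ⌉ : ℓ an edge length of the MST}| is the length diversity; in particular at most c·(1 + log₂ Δ) slots suffice, where Δ is the ratio of the longest to the shortest MST edge length. -/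
open scoped Classical
noncomputable section

open Finset Module

/-!
Group the links by length class `k = ⌈log₂ ℓ⌉`, so that `2^(k-1) < ℓ ≤ 2^k`. The exchange
property of a minimum spanning tree shows that of two distinct MST edges `ab`, `cd`, one endpoint
of `ab` is at distance at least `|ab|` from both `c` and `d`; hence distinct links of class `k`
are `2^(k-1)`-separated as points of `Point × Point` with the max metric. A volume packing
argument then bounds, by a constant depending only on `D`, the number of links of the same class
with an endpoint within `D·2^k` of a given link, so greedy colouring splits each class into a
bounded number of sets in which all senders are `D·2^k` apart from each other and from all
receivers. Summing over dyadic shells around a receiver, the interference in such a set is at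
most `C(α)/(D·2^k)^α`, which is at most `1/(β ℓ^α)` once `D^α ≥ β C(α)`.
-/

open MeasureTheory Metric in
theorem card_le_of_separated_of_dist_le {E : Type*} [NormedAddCommGroup E] [NormedSpace ℝ E]
    [FiniteDimensional ℝ E] (s : Finset E) {z : E} {r δ : ℝ} (hr : 0 ≤ r) (hδ : 0 < δ)
    (hs : ∀ x ∈ s, dist x z ≤ r) (hsep : ∀ x ∈ s, ∀ y ∈ s, x ≠ y → δ ≤ dist x y) :
    (s.card : ℝ) ≤ (2 * r / δ + 1) ^ finrank ℝ E := by
  borelize E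
  set μ : Measure E := Measure.addHaar
  have hδ2 : 0 < δ / 2 := half_pos hδ
  have hρ : 0 < r + δ / 2 := by linarith
  have hdisj : Set.PairwiseDisjoint (s : Set E) fun x => ball x (δ / 2) := by
    intro x hx y hy hxy
    exact ball_disjoint_ball (by linarith [hsep x hx y hy hxy])
  have hsub : (⋃ x ∈ s, ball x (δ / 2)) ⊆ ball z (r + δ / 2) :=
    Set.iUnion₂_subset fun x hx => ball_subset_ball' (by linarith [hs x hx])
  have hvol : (s.card : ENNReal) * ENNReal.ofReal ((δ / 2) ^ finrank ℝ E) * μ (ball 0 1) ≤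
      ENNReal.ofReal ((r + δ / 2) ^ finrank ℝ E) * μ (ball 0 1) :=
    calc (s.card : ENNReal) * ENNReal.ofReal ((δ / 2) ^ finrank ℝ E) * μ (ball 0 1)
        = μ (⋃ x ∈ s, ball x (δ / 2)) := by
          rw [measure_biUnion_finset hdisj fun x _ => measurableSet_ball]
          simp only [μ.addHaar_ball_of_pos _ hδ2, sum_const, nsmul_eq_mul, mul_assoc]
      _ ≤ μ (ball z (r + δ / 2)) := measure_mono hsub
      _ = ENNReal.ofReal ((r + δ / 2) ^ finrank ℝ E) * μ (ball 0 1) :=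
          μ.addHaar_ball_of_pos _ hρ
  have hcard := ENNReal.toReal_le_of_le_ofReal (by positivity)
    ((ENNReal.mul_le_mul_iff_left (measure_ball_pos μ _ one_pos).ne'
      measure_ball_lt_top.ne).1 hvol)
  rw [ENNReal.toReal_mul, ENNReal.toReal_ofReal (by positivity), ENNReal.toReal_natCast] at hcard
  calc (s.card : ℝ) ≤ (r + δ / 2) ^ finrank ℝ E / (δ / 2) ^ finrank ℝ E :=
        (le_div_iff₀ (by positivity)).2 hcard
    _ = (2 * r / δ + 1) ^ finrank ℝ E := by
        rw [← div_pow]; congr 1; field_simp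

section Interference

variable {E : Type*} [NormedAddCommGroup E] [NormedSpace ℝ E] [FiniteDimensional ℝ E]

/-- `8 ^ d` bounds the number of points of a dyadic shell around a receiver, and
`1 / (1 - 2 ^ d / 2 ^ α)` sums the resulting geometric series over the shells. -/
def interferenceConst (d : ℕ) (α : ℝ) : ℝ := 8 ^ d / (1 - 2 ^ d / 2 ^ α)

lemma two_pow_div_two_rpow_lt_one {d : ℕ} {α : ℝ} (hα : d < α) : (2 : ℝ) ^ d / 2 ^ α < 1 := by
  rw [div_lt_one (by positivity), ← Real.rpow_natCast]
  exact Real.rpow_lt_rpow_of_exponent_lt one_lt_two hα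

lemma interferenceConst_pos {d : ℕ} {α : ℝ} (hα : d < α) : 0 < interferenceConst d α :=
  div_pos (by positivity) (sub_pos.2 (two_pow_div_two_rpow_lt_one hα))

lemma sum_one_div_dist_rpow_le_of_shell {α R : ℝ} (hα : 0 ≤ α) (hR : 0 < R) (y : E) (n : ℕ)
    (s : Finset E) (hsep : ∀ x ∈ s, ∀ x' ∈ s, x ≠ x' → R ≤ dist x x')
    (hshell : ∀ x ∈ s, 2 ^ n * R ≤ dist x y ∧ dist x y < 2 ^ (n + 1) * R) :
    ∑ x ∈ s, 1 / dist x y ^ α ≤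
      8 ^ finrank ℝ E / R ^ α * ((2 : ℝ) ^ finrank ℝ E / 2 ^ α) ^ n := by
  set d := finrank ℝ E
  have hcard : (s.card : ℝ) ≤ 8 ^ d * (2 ^ d) ^ n := by
    refine (card_le_of_separated_of_dist_le s (z := y) (by positivity) hR
      (fun x hx => (hshell x hx).2.le) hsep).trans ?_
    rw [← pow_mul, mul_comm d, pow_mul, ← mul_pow, show (8 : ℝ) = 2 ^ 3 by norm_num, ← pow_add]
    gcongr
    field_simp
    rw [pow_add, pow_add]
    linarith [one_le_pow₀ (M₀ := ℝ) (a := 2) (n := n) one_le_two]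
  have hterm : ∀ x ∈ s, 1 / dist x y ^ α ≤ 1 / ((2 ^ α) ^ n * R ^ α) := by
    intro x hx
    rw [Real.rpow_pow_comm zero_le_two, ← Real.mul_rpow (by positivity) hR.le]
    gcongr
    exact (hshell x hx).1
  calc ∑ x ∈ s, 1 / dist x y ^ α ≤ s.card * (1 / ((2 ^ α) ^ n * R ^ α)) := by
        simpa using sum_le_sum hterm
    _ ≤ 8 ^ d * (2 ^ d) ^ n * (1 / ((2 ^ α) ^ n * R ^ α)) := by gcongr
    _ = 8 ^ d / R ^ α * ((2 : ℝ) ^ d / 2 ^ α) ^ n := by rw [div_pow]; field_simp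

theorem sum_one_div_dist_rpow_le {α R : ℝ} (hα : finrank ℝ E < α) (hR : 0 < R) (y : E)
    (s : Finset E) (hsep : ∀ x ∈ s, ∀ x' ∈ s, x ≠ x' → R ≤ dist x x')
    (hfar : ∀ x ∈ s, R ≤ dist x y) :
    ∑ x ∈ s, 1 / dist x y ^ α ≤ interferenceConst (finrank ℝ E) α / R ^ α := by
  set q : ℝ := 2 ^ finrank ℝ E / 2 ^ α
  have hq : q < 1 := two_pow_div_two_rpow_lt_one hα
  have hα0 : 0 ≤ α := (Nat.cast_nonneg _).trans hα.le
  have hshell : ∀ x ∈ s, ∃ n : ℕ, 2 ^ n * R ≤ dist x y ∧ dist x y < 2 ^ (n + 1) * R := by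
    intro x hx
    obtain ⟨n, hn⟩ := exists_nat_pow_near ((one_le_div hR).2 (hfar x hx)) one_lt_two
    exact ⟨n, by rwa [le_div_iff₀ hR, div_lt_iff₀ hR] at hn⟩
  choose! j hj using hshell
  rw [← sum_fiberwise_of_maps_to (fun x hx => mem_image_of_mem j hx)]
  calc ∑ n ∈ s.image j, ∑ x ∈ s with j x = n, 1 / dist x y ^ α
      ≤ ∑ n ∈ s.image j, 8 ^ finrank ℝ E / R ^ α * q ^ n := by
        refine sum_le_sum fun n _ => sum_one_div_dist_rpow_le_of_shell hα0 hR y n _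
          (fun x hx x' hx' => hsep x (mem_filter.1 hx).1 x' (mem_filter.1 hx').1)
          fun x hx => (mem_filter.1 hx).2 ▸ hj x (mem_filter.1 hx).1
    _ = 8 ^ finrank ℝ E / R ^ α * ∑ n ∈ s.image j, q ^ n := by rw [mul_sum]
    _ ≤ 8 ^ finrank ℝ E / R ^ α * (1 - q)⁻¹ := by
        gcongr
        rw [← tsum_geometric_of_lt_one (by positivity) hq]
        exact Summable.sum_le_tsum _ (fun n _ => by positivity)
          (summable_geometric_of_lt_one (by positivity) hq)
    _ = interferenceConst (finrank ℝ E) α / R ^ α := by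
        rw [interferenceConst]; ring

end Interference

theorem feasibleWith_one_of_separated {α β D T : ℝ} (hα : 2 < α) (hβ : 0 ≤ β) (hD : 0 < D)
    (hT : 0 < T) (hDα : β * interferenceConst 2 α ≤ D ^ α) (S : Finset Link)
    (hlen : ∀ l ∈ S, 0 < linkLen l ∧ linkLen l ≤ T)
    (hsep : ∀ l ∈ S, ∀ l' ∈ S, l ≠ l' → D * T ≤ dist l.1 l'.1 ∧ D * T ≤ dist l'.1 l.2) :
    FeasibleWith α β S fun _ => 1 := by
  intro l hl
  have hsenders : Set.InjOn Prod.fst (S.erase l : Set Link) := by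
    intro l₁ h₁ l₂ h₂ h
    by_contra hne
    have := (hsep l₁ (mem_of_mem_erase h₁) l₂ (mem_of_mem_erase h₂) hne).1
    rw [h, dist_self] at this
    linarith [mul_pos hD hT]
  have hdim : finrank ℝ Point = 2 := finrank_euclideanSpace_fin
  have hinterf := sum_one_div_dist_rpow_le (by rw [hdim]; exact_mod_cast hα) (mul_pos hD hT)
    l.2 ((S.erase l).image Prod.fst) ?_ ?_
  · rw [hdim, sum_image hsenders] at hinterf
    obtain ⟨hl0, hlT⟩ := hlen l hl
    calc β * ∑ l' ∈ S.erase l, 1 / dist l'.1 l.2 ^ α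
        ≤ β * (interferenceConst 2 α / (D * T) ^ α) := by gcongr
      _ = β * interferenceConst 2 α / D ^ α * (1 / T ^ α) := by
          rw [Real.mul_rpow hD.le hT.le]; ring
      _ ≤ 1 * (1 / linkLen l ^ α) := by
          gcongr
          exact (div_le_one (by positivity)).2 hDα
      _ = 1 / linkLen l ^ α := one_mul _
  · simp only [mem_image, mem_erase]
    rintro _ ⟨l₁, ⟨-, h₁⟩, rfl⟩ _ ⟨l₂, ⟨-, h₂⟩, rfl⟩ hne
    exact (hsep l₁ h₁ l₂ h₂ (by rintro rfl; exact hne rfl)).1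
  · simp only [mem_image, mem_erase]
    rintro _ ⟨l₁, ⟨hne, h₁⟩, rfl⟩
    exact (hsep l hl l₁ h₁ (Ne.symm hne)).2

namespace SimpleGraph

variable {V : Type*} {G : SimpleGraph V}

theorem reachable_deleteEdges_or_of_reachable {a b v : V} (h : G.Reachable a v) :
    (G.deleteEdges {s(a, b)}).Reachable a v ∨ (G.deleteEdges {s(a, b)}).Reachable b v := by
  rw [reachable_eq_reflTransGen] at h
  induction h with
  | refl => exact Or.inl .rfl
  | @tail u w _ huw ih =>
    by_cases he : s(u, w) = s(a, b)
    · rcases Sym2.eq_iff.1 he with ⟨-, rfl⟩ | ⟨-, rfl⟩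
      exacts [Or.inr .rfl, Or.inl .rfl]
    · have hadj : (G.deleteEdges {s(a, b)}).Adj u w := by simp [huw, he]
      exact ih.imp (·.trans hadj.reachable) (·.trans hadj.reachable)

theorem deleteEdges_sup_edge {a b : V} (h : G.Adj a b) :
    G.deleteEdges {s(a, b)} ⊔ edge a b = G := by
  ext u v
  simp only [sup_adj, deleteEdges_adj, edge_adj, Set.mem_singleton_iff, Sym2.eq_iff]
  constructor
  · rintro (⟨huv, -⟩ | ⟨⟨rfl, rfl⟩ | ⟨rfl, rfl⟩, -⟩)
    exacts [huv, h, h.symm]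
  · intro huv
    by_cases he : u = a ∧ v = b ∨ u = b ∧ v = a
    · exact Or.inr ⟨he, huv.ne⟩
    · exact Or.inl ⟨huv, fun he' => he (by tauto)⟩

end SimpleGraph

open SimpleGraph

theorem treeWeight_sup_edge {P : Finset Point} {G : SimpleGraph ↥P} {u v : ↥P} (huv : u ≠ v)
    (h : ¬G.Adj u v) : treeWeight P (G ⊔ edge u v) = treeWeight P G + dist (u : Point) v := by
  have hsplit : ∀ p q : ↥P, (if (G ⊔ edge u v).Adj p q then dist (p : Point) q else 0) =
      (if G.Adj p q then dist (p : Point) q else 0) +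
        ((if q = v then if p = u then dist (u : Point) v else 0 else 0) +
          (if q = u then if p = v then dist (u : Point) v else 0 else 0)) := by
    intro p q
    by_cases h1 : p = u ∧ q = v
    · obtain ⟨rfl, rfl⟩ := h1
      simp [edge_adj, huv, h]
    by_cases h2 : p = v ∧ q = u
    · obtain ⟨rfl, rfl⟩ := h2
      simp [edge_adj, huv.symm, dist_comm (q : Point), show ¬G.Adj p q from fun h' => h h'.symm]
    simp only [sup_adj, edge_adj]
    split_ifs <;> simp_all
  have hsum := sum_congr rfl fun p (_ : p ∈ P.attach) =>
    sum_congr rfl fun q (_ : q ∈ P.attach) => hsplit p q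
  simp only [sum_add_distrib, sum_ite_eq', mem_attach, if_true] at hsum
  have hhalf : ∀ a b c : ℝ, a = b + (c + c) → 1 / 2 * a = 1 / 2 * b + c := by intros; linarith
  -- `convert` reconciles the classical `Decidable` instance used in `treeWeight`
  exact hhalf _ _ _ (by convert hsum)

section MST

variable {P : Finset Point} {T : SimpleGraph ↥P}

theorem IsMST.dist_le_of_reachable_deleteEdges (hT : IsMST P T) {a b x : ↥P} (hab : T.Adj a b)
    (hx : (T.deleteEdges {s(a, b)}).Reachable b x) :
    dist (a : Point) b ≤ dist (a : Point) x := by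
  set T' := T.deleteEdges {s(a, b)}
  have hab' : ¬T'.Reachable a b := isAcyclic_iff_forall_adj_isBridge.1 hT.1.isAcyclic hab
  have hax : ¬T'.Reachable a x := fun h => hab' (h.trans hx.symm)
  have hne : a ≠ x := by rintro rfl; exact hax .rfl
  have hexchange : (T' ⊔ edge a x).IsTree := by
    refine ⟨(connected_iff_exists_forall_reachable _).2 ⟨a, fun v => ?_⟩,
      (hT.1.isAcyclic.anti (deleteEdges_le _)).sup_edge_of_not_reachable hax⟩
    have hedge : (T' ⊔ edge a x).Adj a x := Or.inr ((edge_adj ..).2 ⟨Or.inl ⟨rfl, rfl⟩, hne⟩)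
    rcases reachable_deleteEdges_or_of_reachable (b := b) (hT.1.connected a v) with h | h
    · exact h.mono le_sup_left
    · exact hedge.reachable.trans ((hx.symm.trans h).mono le_sup_left)
  have hT' : treeWeight P T = treeWeight P T' + dist (a : Point) b := by
    conv_lhs => rw [← deleteEdges_sup_edge hab]
    exact treeWeight_sup_edge hab.ne fun h => hab' h.reachable
  have := hT.2 _ hexchange
  rw [hT', treeWeight_sup_edge hne fun h => hax h.reachable] at this
  linarith

theorem IsMST.dist_le_or_dist_le (hT : IsMST P T) {a b c d : ↥P} (hab : T.Adj a b)
    (hcd : T.Adj c d) (hne : s(a, b) ≠ s(c, d)) :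
    (dist (a : Point) b ≤ dist (a : Point) c ∧ dist (a : Point) b ≤ dist (a : Point) d) ∨
      (dist (a : Point) b ≤ dist (b : Point) c ∧ dist (a : Point) b ≤ dist (b : Point) d) := by
  have key : ∀ {a b : ↥P}, T.Adj a b → s(a, b) ≠ s(c, d) →
      (T.deleteEdges {s(a, b)}).Reachable b c →
      dist (a : Point) b ≤ dist (a : Point) c ∧ dist (a : Point) b ≤ dist (a : Point) d := by
    intro a b hab hne hc
    have hcd' : (T.deleteEdges {s(a, b)}).Adj c d := by simp [hcd, hne.symm]
    exact ⟨hT.dist_le_of_reachable_deleteEdges hab hc,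
      hT.dist_le_of_reachable_deleteEdges hab (hc.trans hcd'.reachable)⟩
  rcases reachable_deleteEdges_or_of_reachable (b := b) (hT.1.connected a c) with h | h
  · rw [Sym2.eq_swap] at hne h
    have := key hab.symm hne h
    rw [dist_comm (b : Point)] at this
    exact Or.inr this
  · exact Or.inl (key hab hne h)

/-- `dist` on `Link = Point × Point` is the sup metric. -/
theorem IsOrientationOf.linkLen_le_dist (hT : IsMST P T) {L : Finset Link}
    (hL : IsOrientationOf P T L) {l l' : Link} (hl : l ∈ L) (hl' : l' ∈ L) (hne : l ≠ l') :
    linkLen l ≤ dist l l' := by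
  obtain ⟨a, b, hab, rfl⟩ := hL.1 l hl
  obtain ⟨c, d, hcd, rfl⟩ := hL.1 l' hl'
  have hne' : s(a, b) ≠ s(c, d) := by
    intro h
    rcases Sym2.eq_iff.1 h with ⟨rfl, rfl⟩ | ⟨rfl, rfl⟩
    exacts [hne rfl, hL.2.2 a b hab ⟨hl, hl'⟩]
  rw [Prod.dist_eq]
  rcases hT.dist_le_or_dist_le hab hcd hne' with h | h
  exacts [le_max_of_le_left h.1, le_max_of_le_right h.2]

end MST

theorem SimpleGraph.exists_coloring_of_card_neighbors_lt {V : Type*} (G : SimpleGraph V)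
    (s : Finset V) {m : ℕ} (h : ∀ v ∈ s, #{w ∈ s | G.Adj v w} < m) :
    ∃ c : V → ℕ, (∀ v ∈ s, c v < m) ∧ ∀ v ∈ s, ∀ w ∈ s, G.Adj v w → c v ≠ c w := by
  induction s using Finset.induction_on with
  | empty => exact ⟨fun _ => 0, by simp, by simp⟩
  | @insert a s ha ih =>
    have hmono : ∀ v, #{w ∈ s | G.Adj v w} ≤ #{w ∈ insert a s | G.Adj v w} := fun v =>
      card_le_card (filter_subset_filter _ (subset_insert _ _))
    obtain ⟨c, hcm, hc⟩ :=
      ih fun v hv => (hmono v).trans_lt (h v (mem_insert_of_mem hv))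
    have hfree : #({w ∈ s | G.Adj a w}.image c) < #(range m) := by
      rw [card_range]
      exact card_image_le.trans_lt ((hmono a).trans_lt (h a (mem_insert_self _ _)))
    obtain ⟨k, hk, hkc⟩ := exists_mem_notMem_of_card_lt_card hfree
    have hkc' : ∀ w ∈ s, G.Adj a w → k ≠ c w := fun w hw haw hkw =>
      hkc (mem_image.2 ⟨w, mem_filter.2 ⟨hw, haw⟩, hkw.symm⟩)
    have hne : ∀ w ∈ s, w ≠ a := fun w hw hwa => ha (hwa ▸ hw)
    refine ⟨Function.update c a k, ?_, ?_⟩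
    · intro v hv
      rcases mem_insert.1 hv with rfl | hv
      · simpa using hk
      · simpa [hne v hv] using hcm v hv
    · intro v hv' w hw' hvw
      rcases mem_insert.1 hv' with rfl | hv <;>
        rcases mem_insert.1 hw' with rfl | hw
      · exact absurd hvw (G.irrefl)
      · simpa [hne w hw] using hkc' w hw hvw
      · simpa [hne v hv] using (hkc' v hv hvw.symm).symm
      · simpa [hne v hv, hne w hw] using hc v hv w hw hvw

theorem isPartition_filter_eq {β : Type*} [DecidableEq β] (L : Finset Link) (φ : Link → β) :
    IsPartition L fun i : Fin #(L.image φ) => {l ∈ L | φ l = (L.image φ).equivFin.symm i} := by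
  refine ⟨fun i => filter_subset _ _, fun l hl => ?_, fun i j hij => ?_⟩
  · refine ⟨(L.image φ).equivFin ⟨φ l, mem_image_of_mem φ hl⟩, ?_⟩
    simp [hl]
  · refine disjoint_left.2 fun l hli hlj => hij ?_
    rw [mem_filter] at hli hlj
    exact (L.image φ).equivFin.symm.injective (Subtype.ext (hli.2.symm.trans hlj.2))

def lengthClass (l : Link) : ℤ := ⌈Real.logb 2 (linkLen l)⌉

theorem two_zpow_lengthClass_div_two_lt {l : Link} (hl : 0 < linkLen l) :
    2 ^ lengthClass l / 2 < linkLen l ∧ linkLen l ≤ 2 ^ lengthClass l := by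
  have hclog : lengthClass l = Int.clog 2 (linkLen l) := by
    simpa [lengthClass] using Real.ceil_logb_natCast (b := 2) hl.le
  rw [hclog, div_eq_mul_inv, ← zpow_sub_one₀ two_ne_zero]
  exact ⟨mod_cast Int.zpow_pred_clog_lt_self one_lt_two hl,
    mod_cast Int.self_le_zpow_clog one_lt_two _⟩

def conflictGraph (D : ℝ) : SimpleGraph Link :=
  SimpleGraph.fromRel fun l l' => lengthClass l = lengthClass l' ∧
    (dist l.1 l'.1 < D * 2 ^ lengthClass l ∨ dist l'.1 l.2 < D * 2 ^ lengthClass l)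

theorem card_conflictGraph_neighbors_le {D : ℝ} (hD : 0 ≤ D) {L : Finset Link}
    (hpos : ∀ l ∈ L, 0 < linkLen l) (hsep : ∀ l ∈ L, ∀ l' ∈ L, l ≠ l' → linkLen l ≤ dist l l')
    {l : Link} (hl : l ∈ L) :
    (#{l' ∈ L | (conflictGraph D).Adj l l'} : ℝ) ≤ (4 * D + 9) ^ 4 := by
  set T : ℝ := 2 ^ lengthClass l
  have hT : 0 < T := by positivity
  have hnear : ∀ l' ∈ L, (conflictGraph D).Adj l l' →
      lengthClass l' = lengthClass l ∧ dist l'.1 l.1 ≤ (D + 1) * T := by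
    intro l' hl' hadj
    have hlT : dist l.1 l.2 ≤ T := (two_zpow_lengthClass_div_two_lt (hpos l hl)).2
    have hl'T : dist l'.1 l'.2 ≤ 2 ^ lengthClass l' :=
      (two_zpow_lengthClass_div_two_lt (hpos l' hl')).2
    simp only [conflictGraph, SimpleGraph.fromRel_adj] at hadj
    obtain ⟨-, ⟨hk, h⟩ | ⟨hk, h⟩⟩ := hadj
    · refine ⟨hk.symm, ?_⟩
      rcases h with h | h <;>
        linarith [dist_triangle l'.1 l.2 l.1, dist_comm l.1 l.2, dist_comm l.1 l'.1]
    · rw [hk] at hl'T h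
      refine ⟨hk, ?_⟩
      rcases h with h | h <;> linarith [dist_triangle l'.1 l'.2 l.1, dist_comm l.1 l'.2]
  have hdim : finrank ℝ Link = 4 := by simp [Module.finrank_prod]
  refine (card_le_of_separated_of_dist_le _ (z := (l.1, l.1)) (r := (D + 2) * T)
    (by positivity) (half_pos hT) (fun l' hl' => ?_) (fun l₁ h₁ l₂ h₂ hne => ?_)).trans_eq ?_
  · obtain ⟨hl', hadj⟩ := mem_filter.1 hl'
    obtain ⟨hk, h₁⟩ := hnear l' hl' hadj
    have h₂ := (two_zpow_lengthClass_div_two_lt (hpos l' hl')).2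
    rw [hk] at h₂
    unfold linkLen at h₂
    rw [Prod.dist_eq, max_le_iff]
    constructor <;> linarith [dist_triangle l'.2 l'.1 l.1, dist_comm l'.1 l'.2]
  · obtain ⟨h₁, hadj⟩ := mem_filter.1 h₁
    have h := (two_zpow_lengthClass_div_two_lt (hpos l₁ h₁)).1
    rw [(hnear l₁ h₁ hadj).1] at h
    linarith [hsep l₁ h₁ l₂ (mem_filter.1 h₂).1 hne]
  · rw [hdim]
    congr 1
    field_simp
    ring

theorem feasibleWith_one_of_forall_not_adj {α β D : ℝ} (hα : 2 < α) (hβ : 0 ≤ β) (hD : 0 < D)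
    (hDα : β * interferenceConst 2 α ≤ D ^ α) {S : Finset Link} {k : ℤ}
    (hpos : ∀ l ∈ S, 0 < linkLen l) (hk : ∀ l ∈ S, lengthClass l = k)
    (hS : ∀ l ∈ S, ∀ l' ∈ S, ¬(conflictGraph D).Adj l l') :
    FeasibleWith α β S fun _ => 1 := by
  refine feasibleWith_one_of_separated hα hβ hD (zpow_pos two_pos k) hDα S
    (fun l hl => ⟨hpos l hl, hk l hl ▸ (two_zpow_lengthClass_div_two_lt (hpos l hl)).2⟩)
    fun l hl l' hl' hne => ?_
  have := hS l hl l' hl'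
  simp only [conflictGraph, SimpleGraph.fromRel_adj, hk l hl, hk l' hl', true_and, not_and,
    not_or, not_lt] at this
  exact (this hne).1

/-- if all MST edges have length at least `1`, any orientation
of the MST can be partitioned into at most `c·g` sets each SINR-feasible with
one common power (uniform power), where
`g = |{⌈log₂ ℓ⌉ : ℓ an MST edge length}|` is the length diversity and
`c = c(α, β)`. -/
theorem uniform_power_length_diversity_bound (α β : ℝ) (hα : 2 < α) (hβ : 1 ≤ β) :
    ∃ c : ℝ, 0 < c ∧
      ∀ (P : Finset Point) (T : SimpleGraph ↥P), IsMST P T →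
        ∀ L : Finset Link, IsOrientationOf P T L →
          (∀ l ∈ L, 1 ≤ linkLen l) →
          ∃ (k : ℕ) (S : Fin k → Finset Link),
            (k : ℝ) ≤ c * ((L.image fun l => ⌈Real.logb 2 (linkLen l)⌉).card : ℝ) ∧
            IsPartition L S ∧
            ∀ i, ∃ W : ℝ, 0 < W ∧ FeasibleWith α β (S i) (fun _ => W) := by
  have hC := interferenceConst_pos (d := 2) (by exact_mod_cast hα)
  set D := (β * interferenceConst 2 α) ^ α⁻¹
  have hD : 0 < D := by positivity
  have hDα : β * interferenceConst 2 α ≤ D ^ α := by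
    rw [← Real.rpow_mul (by positivity), inv_mul_cancel₀ (by positivity), Real.rpow_one]
  set m := ⌊(4 * D + 9) ^ 4⌋₊ + 1
  refine ⟨m, by positivity, fun P T hT L hL hlen => ?_⟩
  have hpos : ∀ l ∈ L, 0 < linkLen l := fun l hl => one_pos.trans_le (hlen l hl)
  obtain ⟨col, hcol_lt, hcol⟩ := (conflictGraph D).exists_coloring_of_card_neighbors_lt L
    (m := m) fun l hl => Nat.lt_succ_of_le (Nat.le_floor (card_conflictGraph_neighbors_le hD.le
      hpos (fun l hl l' hl' => hL.linkLen_le_dist hT hl hl') hl))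
  set φ : Link → ℤ × ℕ := fun l => (lengthClass l, col l)
  refine ⟨_, _, ?_, isPartition_filter_eq L φ, fun i => ⟨1, one_pos, ?_⟩⟩
  · calc (#(L.image φ) : ℝ) ≤ #(L.image lengthClass ×ˢ range m) := by
          refine mod_cast card_le_card (image_subset_iff.2 fun l hl => ?_)
          exact mem_product.2 ⟨mem_image_of_mem _ hl, mem_range.2 (hcol_lt l hl)⟩
      _ = m * #(L.image lengthClass) := by
          rw [card_product, card_range]; push_cast; ring
  · generalize ((L.image φ).equivFin.symm i : ℤ × ℕ) = e
    have hS : ∀ l ∈ {l ∈ L | φ l = e}, l ∈ L ∧ lengthClass l = e.1 ∧ col l = e.2 := by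
      intro l hl
      obtain ⟨hlL, rfl⟩ := mem_filter.1 hl
      exact ⟨hlL, rfl, rfl⟩
    exact feasibleWith_one_of_forall_not_adj hα (by linarith) hD hDα
      (fun l hl => hpos l (hS l hl).1) (fun l hl => (hS l hl).2.1)
      fun l hl l' hl' hadj => hcol l (hS l hl).1 l' (hS l' hl').1 hadj
        ((hS l hl).2.2.trans (hS l' hl').2.2.symm)
end
end

section
/- Let P ⊆ ℝ² be a finite point set, let T₀ be a minimum spanning tree of P, and for 1 ≤ j ≤ i let T_j be a spanning tree of P of minimum total Euclidean edge length among spanning trees edge-disjoint from T₀ ∪ … ∪ T_{j−1} (assuming such spanning trees exist). Let P' be the set of points of P incident to at least one edge of T_i of length at least 1. Then every closed disc of radius 1/4 contains at most 720·i³ points of P' (for i ≥ 1), i.e., O(i³) points. -/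
open scoped Classical
noncomputable section

/-!
Write `u(p)` for the far end of a long edge of `Tᵢ` at a point `p` of the disc, and call an edge
free if it lies in none of `T₀, …, Tᵢ`. By the exchange argument, `Tᵢ` is cut-optimal: an edge
`ab` of `Tᵢ` is no longer than any free edge joining the two sides of `Tᵢ - ab`. Two points of the
disc joined by a free edge (of length `≤ 1/2`) are therefore connected in `Tᵢ` by edges shorter
than `1`. Inside one component of this short subforest, removing the long edge at `p` separates
`u(p)` from `u(q)`, so if `u(p) u(q)` were free we would get `|p u(p)|, |q u(q)| ≤ |u(p) u(q)|`,
which is impossible when `u(p) - c` and `u(q) - c` lie in the same octant. Thus the far ends of one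
component and one octant form a clique of `T₀ ∪ … ∪ Tᵢ`, and points of different components are
adjacent in it. A union of `i + 1` forests has fewer than `2 (i + 1) |X|` ordered adjacent pairs
in any `X`: this bounds such a clique by `2i + 3`, a component by `8 (2i + 3)`, and the set of
points by `18i + 26`.
-/

open Finset SimpleGraph

namespace SimpleGraph

variable {V : Type*} {G : SimpleGraph V}

lemma edgeFinset_deleteEdges_singleton [DecidableEq V] [Fintype G.edgeSet] (e : Sym2 V)
    [Fintype (G.deleteEdges {e}).edgeSet] :
    (G.deleteEdges {e}).edgeFinset = G.edgeFinset.erase e := by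
  ext
  simp [and_comm]

lemma IsAcyclic.exists_isTree_le [Nonempty V] (hG : G.IsAcyclic) : ∃ T, G ≤ T ∧ T.IsTree :=
  let ⟨T, hGT, _, hT⟩ := connected_top.exists_isTree_le_of_le_of_isAcyclic le_top hG
  ⟨T, hGT, hT⟩

lemma IsAcyclic.card_edgeFinset_add_one_le [Fintype V] [Nonempty V] [Fintype G.edgeSet]
    (hG : G.IsAcyclic) : #G.edgeFinset + 1 ≤ Fintype.card V := by
  obtain ⟨T, hGT, hT⟩ := hG.exists_isTree_le
  rw [← hT.card_edgeFinset]
  exact add_le_add_left (card_le_card (edgeFinset_subset_edgeFinset.mpr hGT)) 1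

lemma IsAcyclic.isTree_of_card_edgeFinset [Fintype V] [Nonempty V] [Fintype G.edgeSet]
    (hG : G.IsAcyclic) (hcard : #G.edgeFinset + 1 = Fintype.card V) : G.IsTree := by
  obtain ⟨T, hGT, hT⟩ := hG.exists_isTree_le
  have hsub : G.edgeFinset ⊆ T.edgeFinset := edgeFinset_subset_edgeFinset.mpr hGT
  have heq : G.edgeFinset = T.edgeFinset :=
    eq_of_subset_of_card_le hsub (by have := hT.card_edgeFinset; omega)
  rwa [edgeFinset_inj.mp heq]

lemma IsTree.isTree_deleteEdges_sup_edge [Fintype V] (hG : G.IsTree) {a b x y : V}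
    (hab : G.Adj a b) (hxy : x ≠ y) (hsep : ¬(G.deleteEdges {s(a, b)}).Reachable x y) :
    (G.deleteEdges {s(a, b)} ⊔ edge x y).IsTree := by
  have := hG.connected.nonempty
  refine ((hG.isAcyclic.anti (deleteEdges_le _)).sup_edge_of_not_reachable hsep)
    |>.isTree_of_card_edgeFinset ?_
  have h1 := card_edgeFinset_sup_edge _ (fun h => hsep h.reachable) hxy
  have h2 := hG.card_edgeFinset
  have h3 := card_erase_add_one (mem_edgeFinset.mpr hab : s(a, b) ∈ G.edgeFinset)
  rw [← edgeFinset_deleteEdges_singleton] at h3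
  omega

lemma IsAcyclic.not_reachable_deleteEdges_of_mem_edges (hG : G.IsAcyclic) {x y : V}
    {p : G.Walk x y} (hp : p.IsPath) {e : Sym2 V} (he : e ∈ p.edges) :
    ¬(G.deleteEdges {e}).Reachable x y := by
  rintro ⟨q⟩
  let q' : G.Walk x y := q.mapLe (deleteEdges_le _)
  have hpq : q'.bypass = p := congrArg Subtype.val <|
    (hG.subsingleton_path x y).elim ⟨q'.bypass, q'.bypass_isPath⟩ ⟨p, hp⟩
  have : e ∈ q'.edges := q'.edges_bypass_subset_edges (hpq ▸ he)
  have := q.edges_subset_edgeSet (by simpa [q'] using this)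
  simp at this

lemma IsAcyclic.not_reachable_deleteEdges_of_reachable (hG : G.IsAcyclic) {a a' b b' : V}
    (ha : G.Adj a a') (hb : G.Adj b b') (hne : a ≠ b)
    (hab : (G.deleteEdges {s(a, a')}).Reachable a b) :
    ¬(G.deleteEdges {s(a, a')}).Reachable a' b' := by
  have hbridge := isBridge_iff.mp (isAcyclic_iff_forall_adj_isBridge.mp hG ha)
  by_cases he : s(b, b') = s(a, a')
  · rcases Sym2.eq_iff.mp he with ⟨rfl, -⟩ | ⟨rfl, rfl⟩
    · exact absurd rfl hne
    · exact absurd hab hbridge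
  · exact fun h => hbridge <| hab.trans <|
      (deleteEdges_adj.mpr ⟨hb, he⟩ : (G.deleteEdges _).Adj b b').reachable.trans h.symm

def IsCutOptimal (G : SimpleGraph V) (w : Sym2 V → ℝ) (H : SimpleGraph V) : Prop :=
  ∀ ⦃a b x y : V⦄, G.Adj a b → H.Adj x y → ¬(G.deleteEdges {s(a, b)}).Reachable x y →
    w s(a, b) ≤ w s(x, y)

lemma IsCutOptimal.mono {w : Sym2 V → ℝ} {H H' : SimpleGraph V} (hG : G.IsCutOptimal w H)
    (hH : H' ≤ H) : G.IsCutOptimal w H' :=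
  fun _ _ _ _ hab hxy => hG hab (hH hxy)

lemma IsCutOptimal.reachable_deleteEdges {w : Sym2 V → ℝ} {H : SimpleGraph V}
    (hopt : G.IsCutOptimal w H) (hG : G.IsTree) {x y : V} (hxy : H.Adj x y) {r : ℝ}
    (hr : w s(x, y) < r) : (G.deleteEdges {e | r ≤ w e}).Reachable x y := by
  obtain ⟨p, hp, -⟩ := hG.existsUnique_path x y
  refine ⟨p.toDeleteEdges _ fun e he hle => ?_⟩
  induction e using Sym2.ind with
  | _ a b =>
    have := hopt (p.adj_of_mem_edges he) hxy
      (hG.isAcyclic.not_reachable_deleteEdges_of_mem_edges hp he)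
    exact absurd hle (not_le.mpr (this.trans_lt hr))

def IsSparse (G : SimpleGraph V) (k : ℕ) : Prop :=
  ∀ X : Finset V, #{pq ∈ X ×ˢ X | G.Adj pq.1 pq.2} ≤ k * (#X - 1)

lemma card_filter_adj_eq_two_mul_card_edgeFinset_induce (G : SimpleGraph V) (X : Finset V) :
    #{pq ∈ X ×ˢ X | G.Adj pq.1 pq.2} = 2 * #(G.induce (X : Set V)).edgeFinset := by
  rw [two_mul_card_edgeFinset]
  refine card_bij' (fun pq hpq => (⟨pq.1, (mem_product.mp (mem_filter.mp hpq).1).1⟩,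
    ⟨pq.2, (mem_product.mp (mem_filter.mp hpq).1).2⟩)) (fun pq _ => (pq.1.1, pq.2.1))
    ?_ ?_ ?_ ?_ <;> simp

lemma IsAcyclic.isSparse (hG : G.IsAcyclic) : G.IsSparse 2 := by
  intro X
  rcases X.eq_empty_or_nonempty with rfl | ⟨x, hx⟩
  · simp
  have : Nonempty (X : Set V) := ⟨⟨x, hx⟩⟩
  have := (hG.induce (X : Set V)).card_edgeFinset_add_one_le
  rw [card_filter_adj_eq_two_mul_card_edgeFinset_induce]
  simp only [SetLike.coe_sort_coe, Fintype.card_coe] at this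
  omega

lemma isSparse_iSup {F : ℕ → SimpleGraph V} {i k : ℕ} (hF : ∀ j ≤ i, (F j).IsSparse k) :
    (⨆ j ≤ i, F j).IsSparse ((i + 1) * k) := by
  intro X
  have hsub : {pq ∈ X ×ˢ X | (⨆ j ≤ i, F j).Adj pq.1 pq.2} ⊆
      (range (i + 1)).biUnion fun j => {pq ∈ X ×ˢ X | (F j).Adj pq.1 pq.2} := by
    intro pq hpq
    simp only [mem_filter, iSup_adj] at hpq
    obtain ⟨hX, j, hj, hadj⟩ := hpq
    exact mem_biUnion.mpr ⟨j, mem_range.mpr (Nat.lt_succ_of_le hj), mem_filter.mpr ⟨hX, hadj⟩⟩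
  calc _ ≤ _ := card_le_card hsub
    _ ≤ ∑ j ∈ range (i + 1), #{pq ∈ X ×ˢ X | (F j).Adj pq.1 pq.2} := card_biUnion_le
    _ ≤ ∑ _j ∈ range (i + 1), k * (#X - 1) :=
      sum_le_sum fun j hj => hF j (Nat.lt_succ_iff.mp (mem_range.mp hj)) X
    _ = (i + 1) * k * (#X - 1) := by rw [sum_const, card_range, smul_eq_mul, mul_assoc]

lemma IsSparse.card_le {k M : ℕ} (hG : G.IsSparse k) {K : Type*} (S : Finset V) (κ : V → K)
    (hfiber : ∀ p ∈ S, #{q ∈ S | κ q = κ p} ≤ M)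
    (hcross : ∀ p ∈ S, ∀ q ∈ S, κ p ≠ κ q → G.Adj p q) : #S ≤ M + k := by
  have hrow : ∀ p ∈ S, #S - M ≤ #{q ∈ S | G.Adj p q} := fun p hp => by
    have hsplit := card_filter_add_card_filter_not (s := S) (p := fun q => κ q = κ p)
    have hmono : {q ∈ S | ¬κ q = κ p} ⊆ {q ∈ S | G.Adj p q} :=
      monotone_filter_right S fun q hq hne => hcross p hp q hq (Ne.symm hne)
    have := card_le_card hmono
    have := hfiber p hp
    omega
  have hlow : #S * (#S - M) ≤ #{pq ∈ S ×ˢ S | G.Adj pq.1 pq.2} := by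
    calc #S * (#S - M) = ∑ _p ∈ S, (#S - M) := by rw [sum_const, smul_eq_mul]
      _ ≤ ∑ p ∈ S, #{q ∈ S | G.Adj p q} := sum_le_sum hrow
      _ = #{pq ∈ S ×ˢ S | G.Adj pq.1 pq.2} := by
        rw [card_filter, sum_product]
        exact sum_congr rfl fun p _ => (card_filter _ _)
  have hup := hG S
  by_contra! h
  have h1 : #S * (k + 1) ≤ #S * (#S - M) := Nat.mul_le_mul_left _ (by omega)
  have h2 : k * (#S - 1) ≤ k * #S := Nat.mul_le_mul_left _ (Nat.sub_le _ _)
  nlinarith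

lemma IsSparse.card_le_of_isClique {k : ℕ} (hG : G.IsSparse k) {X : Finset V}
    (hX : G.IsClique (X : Set V)) : #X ≤ 1 + k := by
  refine hG.card_le X id (fun p hp => ?_) fun p hp q hq hpq => hX hp hq hpq
  simp only [id, filter_eq' X p, if_pos hp, card_singleton, le_refl]

lemma le_compl_iSup_lt_iff {F : ℕ → SimpleGraph V} {i : ℕ} :
    G ≤ (⨆ j < i, F j)ᶜ ↔ ∀ a b, G.Adj a b → ∀ j < i, ¬(F j).Adj a b := by
  refine ⟨fun h a b hab j hj hF => ((compl_adj _ _ _).mp (h hab)).2 ?_, fun h a b hab => ?_⟩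
  · simp only [iSup_adj]
    exact ⟨j, hj, hF⟩
  · refine (compl_adj _ _ _).mpr ⟨hab.ne, ?_⟩
    simp only [iSup_adj, not_exists]
    exact fun j hj => h a b hab j hj

end SimpleGraph

def edgeLength (P : Finset Point) : Sym2 ↥P → ℝ :=
  Sym2.lift ⟨fun p q => dist (p : Point) q, fun _ _ => dist_comm _ _⟩

@[simp] lemma edgeLength_mk (P : Finset Point) (p q : ↥P) :
    edgeLength P s(p, q) = dist (p : Point) q := rfl

lemma treeWeight_eq_sum_edgeLength (P : Finset Point) (G : SimpleGraph ↥P)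
    [Fintype G.edgeSet] : treeWeight P G = ∑ e ∈ G.edgeFinset, edgeLength P e := by
  have hdarts : ∑ p ∈ P.attach, ∑ q ∈ P.attach, (if G.Adj p q then dist (p : Point) q else 0) =
      ∑ d : G.Dart, edgeLength P d.edge := by
    rw [← sum_product', ← sum_filter]
    refine sum_bij' (fun pq hpq => ⟨pq, (mem_filter.mp hpq).2⟩) (fun d _ => d.toProd)
      ?_ ?_ ?_ ?_ ?_ <;> simp
  have hfib : ∑ d : G.Dart, edgeLength P d.edge = ∑ e ∈ G.edgeFinset, 2 * edgeLength P e := by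
    rw [← sum_fiberwise_of_maps_to (t := G.edgeFinset) (g := Dart.edge) (by simp)]
    refine sum_congr rfl fun e he => ?_
    rw [sum_congr rfl fun d hd => congrArg (edgeLength P) (mem_filter.mp hd).2, sum_const,
      dart_edge_fiber_card G e (mem_edgeFinset.mp he), nsmul_eq_mul, Nat.cast_ofNat]
  rw [treeWeight, hdarts, hfib, ← mul_sum]
  ring

lemma treeWeight_deleteEdges_sup_edge {P : Finset Point} {G : SimpleGraph ↥P} {a b x y : ↥P}
    (hab : G.Adj a b) (hxy : x ≠ y) (hnadj : ¬(G.deleteEdges {s(a, b)}).Adj x y) :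
    treeWeight P (G.deleteEdges {s(a, b)} ⊔ edge x y) =
      treeWeight P G - dist (a : Point) b + dist (x : Point) y := by
  rw [treeWeight_eq_sum_edgeLength, treeWeight_eq_sum_edgeLength,
    edgeFinset_sup_edge _ hnadj hxy, sum_cons, edgeFinset_deleteEdges_singleton,
    sum_erase_eq_sub (mem_edgeFinset.mpr hab), edgeLength_mk, edgeLength_mk]
  ring

def octant (z : Point) : Bool × Bool × Bool :=
  (decide (0 ≤ z 0), decide (0 ≤ z 1), decide (z 1 ^ 2 ≤ z 0 ^ 2))

lemma mul_nonneg_of_nonneg_iff {a b : ℝ} (h : 0 ≤ a ↔ 0 ≤ b) : 0 ≤ a * b := by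
  rcases le_total 0 a with ha | ha
  · exact mul_nonneg ha (h.mp ha)
  · rcases le_total 0 b with hb | hb
    · nlinarith [h.mpr hb]
    · exact mul_nonneg_of_nonpos_of_nonpos ha hb

/-- Vectors in the same octant make an angle of at most `π / 4`, and `cos (π / 4) > 7 / 10`. -/
lemma inner_ge_of_octant_eq {z w : Point} (h : octant z = octant w) :
    7 / 10 * (‖z‖ * ‖w‖) ≤ inner ℝ z w := by
  simp only [octant, Prod.mk.injEq, decide_eq_decide] at h
  obtain ⟨h0, h1, h2⟩ := h
  have hinner : inner ℝ z w = z 0 * w 0 + z 1 * w 1 := by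
    simp [EuclideanSpace.inner_eq_star_dotProduct, dotProduct, Fin.sum_univ_two, mul_comm]
  have hz : ‖z‖ ^ 2 = z 0 ^ 2 + z 1 ^ 2 := by
    simp [EuclideanSpace.norm_sq_eq, Fin.sum_univ_two]
  have hw : ‖w‖ ^ 2 = w 0 ^ 2 + w 1 ^ 2 := by
    simp [EuclideanSpace.norm_sq_eq, Fin.sum_univ_two]
  have hP := mul_nonneg_of_nonneg_iff h0
  have hQ := mul_nonneg_of_nonneg_iff h1
  have hR := mul_nonneg_of_nonneg_iff (a := z 0 ^ 2 - z 1 ^ 2) (b := w 0 ^ 2 - w 1 ^ 2)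
    (by simpa only [sub_nonneg] using h2)
  -- `2 ⟪z, w⟫² - ‖z‖² ‖w‖² = (z₀² - z₁²) (w₀² - w₁²) + 4 z₀w₀ z₁w₁`
  have hsq : (7 / 10 * (‖z‖ * ‖w‖)) ^ 2 ≤ inner ℝ z w ^ 2 := by
    rw [mul_pow, mul_pow, hz, hw, hinner]
    nlinarith [mul_nonneg hP hQ]
  rw [hinner] at hsq ⊢
  exact le_of_pow_le_pow_left₀ two_ne_zero (add_nonneg hP hQ) hsq

lemma dist_lt_max_of_octant_eq {c p q u v : Point} (hoct : octant (u - c) = octant (v - c))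
    (hp : dist p c ≤ 1 / 4) (hq : dist q c ≤ 1 / 4) (hpu : 1 ≤ dist p u) (hqv : 1 ≤ dist q v) :
    dist u v < max (dist p u) (dist q v) := by
  wlog huv : dist u c ≤ dist v c generalizing p q u v
  · simpa only [dist_comm v u, max_comm] using this hoct.symm hq hp hqv hpu (le_of_not_ge huv)
  refine lt_max_of_lt_right ?_
  have hu : 3 / 4 ≤ dist u c := by linarith [dist_triangle p c u, dist_comm c u]
  have hv : dist v c - 1 / 4 ≤ dist q v := by linarith [dist_triangle v q c, dist_comm v q]
  have hinner := inner_ge_of_octant_eq hoct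
  have huv2 : dist u v ^ 2 = dist u c ^ 2 + dist v c ^ 2 - 2 * inner ℝ (u - c) (v - c) := by
    rw [dist_eq_norm, dist_eq_norm, dist_eq_norm, ← sub_sub_sub_cancel_right u v c,
      norm_sub_sq_real]
    ring
  rw [← dist_eq_norm, ← dist_eq_norm] at hinner
  refine (pow_lt_pow_iff_left₀ dist_nonneg (by linarith) two_ne_zero).mp ?_
  -- For `3/4 ≤ A = |uc| ≤ B = |vc|`, `|uv|² ≤ A² + B² - 7/5 AB` is below `1` if `B ≤ 5/4` and
  -- below `(B - 1/4)²` otherwise; both bounds are at most `|qv|²`.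
  rcases le_total (dist v c) (5 / 4) with hv' | hv'
  · nlinarith
  · nlinarith

lemma isCutOptimal_of_forall_treeWeight_le {P : Finset Point} {G A : SimpleGraph ↥P}
    (hG : G.IsTree) (hGA : G ≤ A)
    (hmin : ∀ T : SimpleGraph ↥P, T.IsTree → T ≤ A → treeWeight P G ≤ treeWeight P T) :
    G.IsCutOptimal (edgeLength P) A := by
  intro a b x y hab hxy hsep
  have hle : G.deleteEdges {s(a, b)} ⊔ edge x y ≤ A :=
    sup_le ((deleteEdges_le _).trans hGA) ((edge_le_iff _).mpr (Or.inr hxy))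
  have := hmin _ (hG.isTree_deleteEdges_sup_edge hab hxy.ne hsep) hle
  rw [treeWeight_deleteEdges_sup_edge hab hxy.ne fun h => hsep h.reachable] at this
  simp only [edgeLength_mk]
  linarith

def shortSubgraph {P : Finset Point} (G : SimpleGraph ↥P) : SimpleGraph ↥P :=
  G.deleteEdges {e | 1 ≤ edgeLength P e}

lemma shortSubgraph_le_deleteEdges {P : Finset Point} (G : SimpleGraph ↥P) {p u : ↥P}
    (h : 1 ≤ dist (p : Point) u) : shortSubgraph G ≤ G.deleteEdges {s(p, u)} :=
  deleteEdges_anti (by simpa using h)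

lemma compl_adj_of_octant_eq {P : Finset Point} {G H : SimpleGraph ↥P} (hG : G.IsAcyclic)
    (hopt : G.IsCutOptimal (edgeLength P) H) {c : Point} {p q u v : ↥P}
    (hp : dist (p : Point) c ≤ 1 / 4) (hq : dist (q : Point) c ≤ 1 / 4)
    (hpu : G.Adj p u) (hqv : G.Adj q v) (hpu1 : 1 ≤ dist (p : Point) u)
    (hqv1 : 1 ≤ dist (q : Point) v) (hpq : p ≠ q) (hshort : (shortSubgraph G).Reachable p q)
    (hoct : octant ((u : Point) - c) = octant ((v : Point) - c)) : Hᶜ.Adj u v := by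
  have hsep_u := hG.not_reachable_deleteEdges_of_reachable hpu hqv hpq
    (hshort.mono (shortSubgraph_le_deleteEdges G hpu1))
  have hsep_v := hG.not_reachable_deleteEdges_of_reachable hqv hpu hpq.symm
    (hshort.symm.mono (shortSubgraph_le_deleteEdges G hqv1))
  refine (compl_adj _ _ _).mpr ⟨fun huv => hsep_u (huv ▸ Reachable.refl _), fun hH => ?_⟩
  have h1 := hopt hpu hH hsep_u
  have h2 := hopt hqv hH.symm hsep_v
  rw [edgeLength_mk, edgeLength_mk] at h1 h2
  have := dist_lt_max_of_octant_eq hoct hp hq hpu1 hqv1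
  rw [dist_comm (v : Point)] at h2
  exact absurd (max_le h1 h2) (not_le.mpr this)

lemma card_le_of_octant_eq {P : Finset Point} {G H : SimpleGraph ↥P} (hG : G.IsAcyclic)
    (hopt : G.IsCutOptimal (edgeLength P) H) {k : ℕ} (hsparse : Hᶜ.IsSparse k) {c : Point}
    {u : ↥P → ↥P} {Y : Finset ↥P} (hnear : ∀ q ∈ Y, dist (q : Point) c ≤ 1 / 4)
    (hlong : ∀ q ∈ Y, G.Adj q (u q) ∧ 1 ≤ dist (q : Point) (u q))
    (hshort : ∀ q ∈ Y, ∀ q' ∈ Y, (shortSubgraph G).Reachable q q')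
    (hoct : ∀ q ∈ Y, ∀ q' ∈ Y, octant ((u q : Point) - c) = octant ((u q' : Point) - c)) :
    #Y ≤ 1 + k := by
  have hclique : ∀ q ∈ Y, ∀ q' ∈ Y, q ≠ q' → Hᶜ.Adj (u q) (u q') := fun q hq q' hq' hne =>
    compl_adj_of_octant_eq hG hopt (hnear q hq) (hnear q' hq') (hlong q hq).1 (hlong q' hq').1
      (hlong q hq).2 (hlong q' hq').2 hne (hshort q hq q' hq') (hoct q hq q' hq')
  have hinj : Set.InjOn u Y := fun q hq q' hq' h =>
    by_contra fun hne => (hclique q hq q' hq' hne).ne h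
  rw [← card_image_of_injOn hinj]
  refine hsparse.card_le_of_isClique fun x hx y hy hxy => ?_
  obtain ⟨q, hq, rfl⟩ := mem_image.mp hx
  obtain ⟨q', hq', rfl⟩ := mem_image.mp hy
  exact hclique q hq q' hq' fun h => hxy (h ▸ rfl)

theorem card_le_of_isCutOptimal {P : Finset Point} {G H : SimpleGraph ↥P} (hG : G.IsTree)
    (hopt : G.IsCutOptimal (edgeLength P) H) {k : ℕ} (hsparse : Hᶜ.IsSparse k) (c : Point) :
    #(P.attach.filter fun p : ↥P =>
        dist (p : Point) c ≤ 1 / 4 ∧ ∃ q, G.Adj p q ∧ 1 ≤ dist (p : Point) q) ≤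
      8 * (1 + k) + k := by
  set S := P.attach.filter fun p : ↥P =>
    dist (p : Point) c ≤ 1 / 4 ∧ ∃ q, G.Adj p q ∧ 1 ≤ dist (p : Point) q
  have hS : ∀ p ∈ S, dist (p : Point) c ≤ 1 / 4 ∧ ∃ q, G.Adj p q ∧ 1 ≤ dist (p : Point) q :=
    fun p hp => (mem_filter.mp hp).2
  have := hG.connected.nonempty
  choose! u hu using fun p hp => (hS p hp).2
  let κ := (shortSubgraph G).connectedComponentMk
  have hclass : ∀ p ∈ S, #{q ∈ S | κ q = κ p} ≤ 8 * (1 + k) := by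
    intro p hp
    have hpiece : ∀ t, #{q ∈ S | κ q = κ p ∧ octant ((u q : Point) - c) = t} ≤ 1 + k := by
      intro t
      have hY : ∀ q ∈ {q ∈ S | κ q = κ p ∧ octant ((u q : Point) - c) = t},
          q ∈ S ∧ κ q = κ p ∧ octant ((u q : Point) - c) = t := fun q hq => mem_filter.mp hq
      exact card_le_of_octant_eq hG.isAcyclic hopt hsparse (fun q hq => (hS q (hY q hq).1).1)
        (fun q hq => hu q (hY q hq).1)
        (fun q hq q' hq' => ConnectedComponent.exact ((hY q hq).2.1.trans (hY q' hq').2.1.symm))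
        (fun q hq q' hq' => (hY q hq).2.2.trans (hY q' hq').2.2.symm)
    calc _ ≤ (1 + k) * #(image (fun q => octant ((u q : Point) - c)) {q ∈ S | κ q = κ p}) :=
          card_le_mul_card_image _ _ fun t _ => by simpa only [filter_filter] using hpiece t
      _ ≤ (1 + k) * 8 := Nat.mul_le_mul_left _ (card_le_univ _)
      _ = 8 * (1 + k) := mul_comm _ _
  refine hsparse.card_le S κ hclass fun p hp q hq hne => (compl_adj _ _ _).mpr
    ⟨fun h => hne (h ▸ rfl), fun hH => hne (ConnectedComponent.sound ?_)⟩
  refine hopt.reachable_deleteEdges hG hH ?_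
  linarith [edgeLength_mk P p q, dist_triangle (p : Point) c q, dist_comm (q : Point) c,
    (hS p hp).1, (hS q hq).1]

/-- let `T 0` be a minimum spanning tree of `P` and, for
`1 ≤ j ≤ i`, let `T j` be a minimum-weight spanning tree among those
edge-disjoint from `T 0, …, T (j-1)`. Then every closed disc of radius `1/4`
contains at most `720·i³` points of `P` incident to an edge of `T i` of
length at least `1`. -/
theorem few_points_in_disc_for_iterated_mst (P : Finset Point) (i : ℕ) (hi : 1 ≤ i)
    (T : ℕ → SimpleGraph ↥P) (hT0 : IsMST P (T 0))
    (hTj : ∀ j : ℕ, 1 ≤ j → j ≤ i →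
      (T j).IsTree ∧
      (∀ a b : ↥P, (T j).Adj a b → ∀ j' < j, ¬(T j').Adj a b) ∧
      (∀ T' : SimpleGraph ↥P, T'.IsTree →
        (∀ a b : ↥P, T'.Adj a b → ∀ j' < j, ¬(T j').Adj a b) →
        treeWeight P (T j) ≤ treeWeight P T'))
    (c : Point) :
    (P.attach.filter (fun p : ↥P =>
        dist (p : Point) c ≤ 1 / 4 ∧
        ∃ q : ↥P, (T i).Adj p q ∧ 1 ≤ dist (p : Point) (q : Point))).card ≤
      720 * i ^ 3 := by
  obtain ⟨hTi, hdisj, hmin⟩ := hTj i hi le_rfl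
  have hacyclic : ∀ j ≤ i, (T j).IsAcyclic := fun j hj => by
    rcases Nat.eq_zero_or_pos j with rfl | hj0
    · exact hT0.1.isAcyclic
    · exact (hTj j hj0 hj).1.isAcyclic
  have hopt : (T i).IsCutOptimal (edgeLength P) (⨆ j ≤ i, T j)ᶜ :=
    (isCutOptimal_of_forall_treeWeight_le hTi (le_compl_iSup_lt_iff.mpr hdisj)
      fun T' hT' hle => hmin T' hT' (le_compl_iSup_lt_iff.mp hle)).mono
      (compl_le_compl (biSup_mono fun _ => le_of_lt))
  have hsparse : (⨆ j ≤ i, T j)ᶜᶜ.IsSparse ((i + 1) * 2) := by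
    rw [compl_compl]
    exact isSparse_iSup fun j hj => (hacyclic j hj).isSparse
  calc _ ≤ 8 * (1 + (i + 1) * 2) + (i + 1) * 2 := card_le_of_isCutOptimal hTi hopt hsparse c
    _ ≤ 720 * i ^ 3 := by nlinarith [Nat.one_le_pow 2 i hi]
end
end
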